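/- arXiv:2009.09351 — 11 statements merged into one kernel-verified Lean document; each statement's English description precedes it below -/
import Mathlib

section
/- Assume each valuation v_i is homogeneous of degree r, concave, and differentiable, let ρ ∈ (0,1], and let p(y) = (∑_{j=1}^m q_j y_j)^{1/ρ} for some constants q_1,…,q_m ∈ ℝ_{≥0}. Then for any agent i, if x_i ∈ D_i(p), the payment equals a fixed fraction of the valuation: p(x_i) = ρ·r·v_i(x_i). -/
def Nonneg {m : ℕ} (y : Fin m → ℝ) : Prop := ∀ j, 0 ≤ y j

def InDemand {m : ℕ} (v p : (Fin m → ℝ) → ℝ) (y : Fin m → ℝ) : Prop :=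
  Nonneg y ∧ ∀ z, Nonneg z → v z - p z ≤ v y - p y

/-- Homogeneity of degree `r` on the nonnegative orthant. -/
def Homog {m : ℕ} (r : ℝ) (v : (Fin m → ℝ) → ℝ) : Prop :=
  ∀ y, Nonneg y → ∀ c : ℝ, 0 ≤ c → v (c • y) = c ^ r * v y

def MonotoneVal {m : ℕ} (v : (Fin m → ℝ) → ℝ) : Prop :=
  ∀ y z : Fin m → ℝ, Nonneg y → Nonneg z → (∀ j, y j ≤ z j) → v y ≤ v z

def NonzeroVal {m : ℕ} (v : (Fin m → ℝ) → ℝ) : Prop :=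
  ∃ y, Nonneg y ∧ 0 < v y

/-- Differentiability: all partial derivatives exist at every point of the
nonnegative orthant. -/
def DiffVal {m : ℕ} (v : (Fin m → ℝ) → ℝ) : Prop :=
  ∀ y : Fin m → ℝ, Nonneg y → ∀ j, ∃ d : ℝ,
    HasDerivWithinAt (fun t => v (Function.update y j t)) d (Set.Ici 0) (y j)

/-! Along the ray `c ↦ c • x` the valuation scales like `c ^ r` and the price like `c ^ (1 / ρ)`,
so the utility of the demanded bundle `x` restricted to the ray, `c ^ r * v x - c ^ (1 / ρ) * p x`,
is maximal at `c = 1`. Setting its derivative there to zero gives the Euler-type identity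
`r * v x = (1 / ρ) * p x`. -/

theorem mul_eq_mul_of_isLocalMax_rpow_sub_rpow {r s a b : ℝ}
    (h : IsLocalMax (fun c : ℝ => c ^ r * a - c ^ s * b) 1) : r * a = s * b := by
  have hderiv : HasDerivAt (fun c : ℝ => c ^ r * a - c ^ s * b) (r * a - s * b) 1 := by
    have hr := Real.hasDerivAt_rpow_const (x := 1) (p := r) (Or.inl one_ne_zero)
    have hs := Real.hasDerivAt_rpow_const (x := 1) (p := s) (Or.inl one_ne_zero)
    rw [Real.one_rpow, mul_one] at hr hs
    exact (hr.mul_const a).sub (hs.mul_const b)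
  exact sub_eq_zero.mp (h.hasDerivAt_eq_zero hderiv)

theorem homog_rpow_sum_mul {m : ℕ} {q : Fin m → ℝ} (hq : ∀ j, 0 ≤ q j) (s : ℝ) :
    Homog s (fun y => (∑ j, q j * y j) ^ s) := by
  intro y hy c hc
  have hsum : ∑ j, q j * (c • y) j = c * ∑ j, q j * y j := by
    simp only [Pi.smul_apply, smul_eq_mul, Finset.mul_sum]
    exact Finset.sum_congr rfl fun j _ => by ring
  simp only [hsum]
  exact Real.mul_rpow hc (Finset.sum_nonneg fun j _ => mul_nonneg (hq j) (hy j))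

namespace InDemand

variable {m : ℕ} {v p : (Fin m → ℝ) → ℝ} {x : Fin m → ℝ} {r s : ℝ}

theorem isLocalMax_rpow_sub_rpow (hv : Homog r v) (hp : Homog s p) (hx : InDemand v p x) :
    IsLocalMax (fun c : ℝ => c ^ r * v x - c ^ s * p x) 1 := by
  filter_upwards [Ici_mem_nhds one_pos] with c (hc : 0 ≤ c)
  have hcx : Nonneg (c • x) := fun j => mul_nonneg hc (hx.1 j)
  simpa [hv x hx.1 c hc, hp x hx.1 c hc] using hx.2 (c • x) hcx

theorem mul_eq_mul_of_homog (hv : Homog r v) (hp : Homog s p) (hx : InDemand v p x) :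
    s * p x = r * v x :=
  (mul_eq_mul_of_isLocalMax_rpow_sub_rpow (hx.isLocalMax_rpow_sub_rpow hv hp)).symm

end InDemand

theorem stmt1_general {m : ℕ} (v : (Fin m → ℝ) → ℝ) (r ρ : ℝ)
    (hρ0 : 0 < ρ)
    (hhom : Homog r v)
    (q : Fin m → ℝ) (hq : ∀ j, 0 ≤ q j)
    (x : Fin m → ℝ)
    (hx : InDemand v (fun y => (∑ j, q j * y j) ^ (1 / ρ)) x) :
    (∑ j, q j * x j) ^ (1 / ρ) = ρ * r * v x := by
  have euler := hx.mul_eq_mul_of_homog hhom (homog_rpow_sum_mul hq (1 / ρ))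
  field_simp at euler
  linarith

theorem stmt1 {m : ℕ} (v : (Fin m → ℝ) → ℝ) (r ρ : ℝ)
    (hρ0 : 0 < ρ) (hρ1 : ρ ≤ 1)
    (hnz : NonzeroVal v) (hmono : MonotoneVal v) (hnorm : v 0 = 0)
    (hhom : Homog r v)
    (hconc : ConcaveOn ℝ {y : Fin m → ℝ | Nonneg y} v)
    (hdiff : DiffVal v)
    (q : Fin m → ℝ) (hq : ∀ j, 0 ≤ q j)
    (x : Fin m → ℝ)
    (hx : InDemand v (fun y => (∑ j, q j * y j) ^ (1 / ρ)) x) :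
    (∑ j, q j * x j) ^ (1 / ρ) = ρ * r * v x :=
  stmt1_general v r ρ hρ0 hhom q hq x hx
end

section
/- Let there be a single good (m = 1) and n agents with valuations v_i(x) = w_i·x^r for constants w_i > 0 and r ∈ (0,1]. Fix ρ ∈ (0,1] with rρ ≠ 1. Then a valid allocation x ∈ Ψ(ρ) if and only if each agent i receives x_i = w_i^{ρ/(1−rρ)} / ∑_{k=1}^n w_k^{ρ/(1−rρ)}. Moreover, if r = ρ = 1 and x ∈ Ψ(ρ), then x_i > 0 implies w_i = max_{k} w_k. -/
/-!
For `s = rρ < 1` the `ρ`-th power of the welfare is `∑ wᵢ^ρ xᵢ^s`. Writing `wᵢ^ρ = cᵢ^(1-s)` with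
`cᵢ = wᵢ^(ρ/(1-s))` and `pᵢ = cᵢ / ∑ c`, this is `(∑ c)^(1-s) · ∑ pᵢ^(1-s) xᵢ^s`, and the weighted
AM-GM inequality `pᵢ^(1-s) xᵢ^s ≤ (1-s) pᵢ + s xᵢ`, strict unless `xᵢ = pᵢ`, shows that the second
factor is at most `1` on valid allocations, with equality exactly at `x = p`.
For `r = ρ = 1` the welfare is linear, and moving agent `i`'s share to agent `k` changes it by
`xᵢ (w_k - wᵢ)`.
-/

/-- A valid single-good allocation. -/
def Valid1 {n : ℕ} (x : Fin n → ℝ) : Prop := (∀ i, 0 ≤ x i) ∧ ∑ i, x i ≤ 1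

/-- Single-good CES welfare `Φ(ρ, x)`. -/
noncomputable def CES1 {n : ℕ} (v : Fin n → ℝ → ℝ) (ρ : ℝ) (x : Fin n → ℝ) : ℝ :=
  (∑ i, v i (x i) ^ ρ) ^ (1 / ρ)

/-- `x ∈ Ψ(ρ)` for a single good: valid allocation maximizing CES welfare. -/
def MaxCES1 {n : ℕ} (v : Fin n → ℝ → ℝ) (ρ : ℝ) (x : Fin n → ℝ) : Prop :=
  Valid1 x ∧ ∀ y, Valid1 y → CES1 v ρ y ≤ CES1 v ρ x

open Real Finset

section SubProbabilityVectors

variable {ι : Type*} [Fintype ι] {p x : ι → ℝ} {s : ℝ}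

theorem sum_rpow_mul_rpow_le_one (hp : ∀ i, 0 ≤ p i) (hp1 : ∑ i, p i = 1)
    (hx : ∀ i, 0 ≤ x i) (hx1 : ∑ i, x i ≤ 1) (hs0 : 0 ≤ s) (hs1 : s ≤ 1) :
    ∑ i, p i ^ (1 - s) * x i ^ s ≤ 1 :=
  calc ∑ i, p i ^ (1 - s) * x i ^ s ≤ ∑ i, ((1 - s) * p i + s * x i) :=
        sum_le_sum fun i _ =>
          geom_mean_le_arith_mean2_weighted (by linarith) hs0 (hp i) (hx i) (by ring)
    _ = (1 - s) * ∑ i, p i + s * ∑ i, x i := by rw [sum_add_distrib, mul_sum, mul_sum]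
    _ ≤ 1 := by rw [hp1]; nlinarith

theorem sum_rpow_mul_rpow_lt_one (hp : ∀ i, 0 ≤ p i) (hp1 : ∑ i, p i = 1)
    (hx : ∀ i, 0 ≤ x i) (hx1 : ∑ i, x i ≤ 1) (hs0 : 0 < s) (hs1 : s < 1) {j : ι}
    (hj : x j ≠ p j) :
    ∑ i, p i ^ (1 - s) * x i ^ s < 1 :=
  calc ∑ i, p i ^ (1 - s) * x i ^ s < ∑ i, ((1 - s) * p i + s * x i) :=
        sum_lt_sum
          (fun i _ => geom_mean_le_arith_mean2_weighted (by linarith) hs0.le (hp i) (hx i)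
            (by ring))
          ⟨j, mem_univ j, (geom_mean_lt_arith_mean2_weighted_iff_of_pos (by linarith) hs0
            (hp j) (hx j) (by ring)).2 hj.symm⟩
    _ = (1 - s) * ∑ i, p i + s * ∑ i, x i := by rw [sum_add_distrib, mul_sum, mul_sum]
    _ ≤ 1 := by rw [hp1]; nlinarith

theorem sum_rpow_mul_rpow_self (hp : ∀ i, 0 ≤ p i) :
    ∑ i, p i ^ (1 - s) * p i ^ s = ∑ i, p i := by
  refine sum_congr rfl fun i _ => ?_
  rw [← rpow_add' (hp i) (by norm_num), sub_add_cancel, rpow_one]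

theorem maximizes_sum_rpow_mul_rpow_iff (hp : ∀ i, 0 ≤ p i) (hp1 : ∑ i, p i = 1)
    (hx : ∀ i, 0 ≤ x i) (hx1 : ∑ i, x i ≤ 1) (hs0 : 0 < s) (hs1 : s < 1) :
    (∀ y : ι → ℝ, (∀ i, 0 ≤ y i) ∧ ∑ i, y i ≤ 1 →
      ∑ i, p i ^ (1 - s) * y i ^ s ≤ ∑ i, p i ^ (1 - s) * x i ^ s) ↔ x = p := by
  have hpp : ∑ i, p i ^ (1 - s) * p i ^ s = 1 := (sum_rpow_mul_rpow_self hp).trans hp1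
  constructor
  · intro hmax
    by_contra hne
    obtain ⟨j, hj⟩ := Function.ne_iff.1 hne
    have hle := hmax p ⟨hp, hp1.le⟩
    linarith [sum_rpow_mul_rpow_lt_one hp hp1 hx hx1 hs0 hs1 hj]
  · rintro rfl y ⟨hy, hy1⟩
    rw [hpp]
    exact sum_rpow_mul_rpow_le_one hp hp1 hy hy1 hs0.le hs1.le

theorem sum_rpow_mul_rpow_eq_mul {c y : ι → ℝ} (hc : ∀ i, 0 ≤ c i) (hA : 0 < ∑ i, c i) :
    ∑ i, c i ^ (1 - s) * y i ^ s =
      (∑ k, c k) ^ (1 - s) * ∑ i, (c i / ∑ k, c k) ^ (1 - s) * y i ^ s := by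
  rw [mul_sum]
  refine sum_congr rfl fun i _ => ?_
  rw [div_rpow (hc i) hA.le, ← mul_assoc, mul_div_cancel₀ _ (rpow_pos_of_pos hA _).ne']

theorem maximizes_sum_rpow_mul_rpow_iff_eq_div_sum {c : ι → ℝ} (hc : ∀ i, 0 < c i)
    (hx : ∀ i, 0 ≤ x i) (hx1 : ∑ i, x i ≤ 1) (hs0 : 0 < s) (hs1 : s < 1) :
    (∀ y : ι → ℝ, (∀ i, 0 ≤ y i) ∧ ∑ i, y i ≤ 1 →
      ∑ i, c i ^ (1 - s) * y i ^ s ≤ ∑ i, c i ^ (1 - s) * x i ^ s) ↔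
      ∀ i, x i = c i / ∑ k, c k := by
  rcases isEmpty_or_nonempty ι with hι | hι
  · simp
  have hA : 0 < ∑ k, c k := sum_pos (fun i _ => hc i) univ_nonempty
  have hp : ∀ i, 0 ≤ c i / ∑ k, c k := fun i => div_nonneg (hc i).le hA.le
  have hp1 : ∑ i, c i / ∑ k, c k = 1 := by rw [← sum_div, div_self hA.ne']
  simp_rw [sum_rpow_mul_rpow_eq_mul (fun i => (hc i).le) hA,
    mul_le_mul_iff_right₀ (rpow_pos_of_pos hA (1 - s))]
  rw [maximizes_sum_rpow_mul_rpow_iff hp hp1 hx hx1 hs0 hs1, funext_iff]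

theorem le_of_maximizes_sum_mul [DecidableEq ι] {w : ι → ℝ} (hx : ∀ i, 0 ≤ x i)
    (hx1 : ∑ i, x i ≤ 1)
    (hmax : ∀ y : ι → ℝ, (∀ i, 0 ≤ y i) ∧ ∑ i, y i ≤ 1 → ∑ i, w i * y i ≤ ∑ i, w i * x i)
    {i : ι} (hxi : 0 < x i) (k : ι) : w k ≤ w i := by
  set y := x + Pi.single k (x i) - Pi.single i (x i)
  have hy : ∀ j, 0 ≤ y j := by
    intro j
    simp only [y, Pi.add_apply, Pi.sub_apply, Pi.single_apply]
    split_ifs <;> subst_vars <;> linarith [hx j]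
  have hy1 : ∑ j, y j = ∑ j, x j := by
    simp [y, sum_add_distrib, sum_sub_distrib]
  have hwy : ∑ j, w j * y j = ∑ j, w j * x j + x i * (w k - w i) := by
    change w ⬝ᵥ y = w ⬝ᵥ x + _
    rw [dotProduct_sub, dotProduct_add, dotProduct_single, dotProduct_single]
    ring
  have hgain : x i * w k ≤ x i * w i := by linarith [hmax y ⟨hy, hy1 ▸ hx1⟩]
  exact le_of_mul_le_mul_left hgain hxi

end SubProbabilityVectors

section PowerValuations

variable {n : ℕ} {w : Fin n → ℝ} {r ρ : ℝ} {v : Fin n → ℝ → ℝ} {x : Fin n → ℝ}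

theorem CES1_eq_of_power (hw : ∀ i, 0 ≤ w i) (hv : ∀ i t, v i t = w i * t ^ r)
    {y : Fin n → ℝ} (hy : ∀ i, 0 ≤ y i) :
    CES1 v ρ y = (∑ i, w i ^ ρ * y i ^ (r * ρ)) ^ (1 / ρ) := by
  unfold CES1
  congr 1
  refine sum_congr rfl fun i _ => ?_
  rw [hv, mul_rpow (hw i) (rpow_nonneg (hy i) r), ← rpow_mul (hy i)]

theorem maxCES1_iff_of_power (hw : ∀ i, 0 ≤ w i) (hv : ∀ i t, v i t = w i * t ^ r)
    (hρ : 0 < ρ) (hx : Valid1 x) :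
    MaxCES1 v ρ x ↔
      ∀ y, Valid1 y → ∑ i, w i ^ ρ * y i ^ (r * ρ) ≤ ∑ i, w i ^ ρ * x i ^ (r * ρ) := by
  have hsum : ∀ y : Fin n → ℝ, (∀ i, 0 ≤ y i) → 0 ≤ ∑ i, w i ^ ρ * y i ^ (r * ρ) :=
    fun y hy => sum_nonneg fun i _ => mul_nonneg (rpow_nonneg (hw i) _) (rpow_nonneg (hy i) _)
  refine (and_iff_right hx).trans (forall_congr' fun y => imp_congr_right fun hy => ?_)
  rw [CES1_eq_of_power hw hv hy.1, CES1_eq_of_power hw hv hx.1,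
    rpow_le_rpow_iff (hsum y hy.1) (hsum x hx.1) (one_div_pos.2 hρ)]

end PowerValuations

theorem stmt4 {n : ℕ} (w : Fin n → ℝ) (hw : ∀ i, 0 < w i) (r ρ : ℝ)
    (hr0 : 0 < r) (hr1 : r ≤ 1) (hρ0 : 0 < ρ) (hρ1 : ρ ≤ 1)
    (v : Fin n → ℝ → ℝ) (hv : ∀ i t, v i t = w i * t ^ r)
    (x : Fin n → ℝ) (hx : Valid1 x) :
    (r * ρ ≠ 1 →
      (MaxCES1 v ρ x ↔
        ∀ i, x i = w i ^ (ρ / (1 - r * ρ)) / ∑ k, w k ^ (ρ / (1 - r * ρ)))) ∧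
    (r = 1 → ρ = 1 → MaxCES1 v ρ x → ∀ i, 0 < x i → ∀ k, w k ≤ w i) := by
  have hw0 : ∀ i, 0 ≤ w i := fun i => (hw i).le
  refine ⟨fun hrρ => ?_, ?_⟩
  · have hs0 : 0 < r * ρ := mul_pos hr0 hρ0
    have hs1 : r * ρ < 1 := (mul_le_one₀ hr1 hρ0.le hρ1).lt_of_ne hrρ
    have hwc : ∀ i, w i ^ ρ = (w i ^ (ρ / (1 - r * ρ))) ^ (1 - r * ρ) := fun i => by
      rw [← rpow_mul (hw0 i), div_mul_cancel₀ _ (sub_pos.2 hs1).ne']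
    rw [maxCES1_iff_of_power hw0 hv hρ0 hx]
    simp_rw [hwc]
    exact maximizes_sum_rpow_mul_rpow_iff_eq_div_sum (fun i => rpow_pos_of_pos (hw i) _)
      hx.1 hx.2 hs0 hs1
  · rintro rfl rfl hmax i hxi k
    rw [maxCES1_iff_of_power hw0 hv one_pos hx] at hmax
    simp only [rpow_one, mul_one] at hmax
    exact le_of_maximizes_sum_mul hx.1 hx.2 hmax hxi k
end

section
/- Uniqueness of the truthful payment rule: let m = 1, r ∈ (0,1], ρ ∈ (0,1), α = ρ/(1−rρ), and fix positive bids b_{−i} of agents other than i. Define x_i(b) = b^α / (b^α + ∑_{k≠i} b_k^α) and p_i(b) = r·α·(∑_{k≠i} b_k^α) · ∫_0^{b} t^{rα} / (t^α + ∑_{k≠i} b_k^α)^{r+1} dt for b > 0. Suppose p̃ : ℝ_{>0} → ℝ_{≥0} is any payment function such that for every w > 0, w ∈ argmax_{b > 0} (w·x_i(b)^r − p̃(b)). Then there exists a constant c such that p̃(b) = p_i(b) + c for all b > 0. -/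
/-!
Truthfulness of bid `w` against `t` and of `t` against `w` gives, for `0 < w ≤ t`,
`w (f t - f w) ≤ p̃ t - p̃ w ≤ t (f t - f w)` with `f = x ^ r`. The payment `p` obeys the same
bounds because `p' s = s f' s` and `f' ≥ 0`. Hence `g = p̃ - p` satisfies
`|g t - g w| ≤ (t - w) (f t - f w)`; telescoping over a partition of `[a, c]` into `N` equal
pieces gives `|g c - g a| ≤ (c - a) (f c - f a) / N`, so `g` is constant.
-/

open Set Filter Topology intervalIntegral

def PaymentSandwich (f q : ℝ → ℝ) : Prop :=
  ∀ w t, 0 < w → w ≤ t → w * (f t - f w) ≤ q t - q w ∧ q t - q w ≤ t * (f t - f w)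

section Telescoping

variable {f g : ℝ → ℝ} {a c : ℝ}

lemma abs_sub_le_div_mul_sub_of_forall_abs_sub_le
    (H : ∀ w t, a ≤ w → w ≤ t → |g t - g w| ≤ (t - w) * (f t - f w))
    (hac : a ≤ c) {N : ℕ} (hN : 0 < N) :
    |g c - g a| ≤ (c - a) / N * (f c - f a) := by
  set δ := (c - a) / N
  have hδ : 0 ≤ δ := div_nonneg (sub_nonneg.2 hac) N.cast_nonneg
  let u : ℕ → ℝ := fun k => a + k * δ
  have hu0 : u 0 = a := by simp [u]
  have huN : u N = c := by
    simp only [u, δ]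
    field_simp [(Nat.cast_pos.2 hN).ne']
    ring
  have hstep : ∀ k, u (k + 1) - u k = δ := fun k => by simp only [u]; push_cast; ring
  calc |g c - g a| = |∑ k ∈ Finset.range N, (g (u (k + 1)) - g (u k))| := by
        rw [Finset.sum_range_sub (fun k => g (u k)), hu0, huN]
    _ ≤ ∑ k ∈ Finset.range N, |g (u (k + 1)) - g (u k)| := Finset.abs_sum_le_sum_abs _ _
    _ ≤ ∑ k ∈ Finset.range N, δ * (f (u (k + 1)) - f (u k)) := by
        refine Finset.sum_le_sum fun k _ => ?_
        rw [← hstep k]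
        exact H _ _ (le_add_of_nonneg_right (by positivity)) (by linarith [hstep k])
    _ = δ * (f c - f a) := by
        rw [← Finset.mul_sum, Finset.sum_range_sub (fun k => f (u k)), hu0, huN]

lemma eq_of_forall_abs_sub_le_mul_sub
    (H : ∀ w t, a ≤ w → w ≤ t → |g t - g w| ≤ (t - w) * (f t - f w)) (hac : a ≤ c) :
    g c = g a := by
  have hlim : Tendsto (fun N : ℕ => (c - a) * (f c - f a) / N) atTop (𝓝 0) :=
    tendsto_const_div_atTop_nhds_zero_nat _
  have hle : |g c - g a| ≤ 0 := by
    refine ge_of_tendsto hlim (eventually_atTop.2 ⟨1, fun N hN => ?_⟩)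
    rw [mul_div_right_comm]
    exact abs_sub_le_div_mul_sub_of_forall_abs_sub_le H hac hN
  exact sub_eq_zero.1 (abs_nonpos_iff.1 hle)

end Telescoping

namespace PaymentSandwich

variable {f q q' : ℝ → ℝ}

lemma of_truthful (h : ∀ w, 0 < w → ∀ t, 0 < t → w * f t - q t ≤ w * f w - q w) :
    PaymentSandwich f q := fun w t hw hwt => by
  have ht : 0 < t := hw.trans_le hwt
  constructor <;> linarith [h w hw t ht, h t ht w hw]

lemma exists_eq_add_const (hq : PaymentSandwich f q) (hq' : PaymentSandwich f q') :
    ∃ c, ∀ t, 0 < t → q t = q' t + c := by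
  have H : ∀ a, 0 < a → ∀ w t, a ≤ w → w ≤ t →
      |(q - q') t - (q - q') w| ≤ (t - w) * (f t - f w) := fun a ha w t haw hwt => by
    obtain ⟨h₁, h₂⟩ := hq w t (ha.trans_le haw) hwt
    obtain ⟨h₁', h₂'⟩ := hq' w t (ha.trans_le haw) hwt
    rw [abs_le, Pi.sub_apply, Pi.sub_apply]
    constructor <;> linarith
  refine ⟨q 1 - q' 1, fun t ht => ?_⟩
  rcases le_total t 1 with h | h
  · have := eq_of_forall_abs_sub_le_mul_sub (H t ht) h
    simp only [Pi.sub_apply] at this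
    linarith
  · have := eq_of_forall_abs_sub_le_mul_sub (H 1 one_pos) h
    simp only [Pi.sub_apply] at this
    linarith

lemma of_hasDerivAt {f' : ℝ → ℝ} (hf : ∀ s, 0 < s → HasDerivAt f (f' s) s)
    (hf' : ∀ s, 0 < s → 0 ≤ f' s)
    (hq : ∀ w t, 0 < w → w ≤ t → q t - q w = ∫ s in w..t, s * f' s) :
    PaymentSandwich f q := fun w t hw hwt => by
  have hpos : ∀ s ∈ uIcc w t, 0 < s := fun s hs =>
    hw.trans_le (by rw [uIcc_of_le hwt] at hs; exact hs.1)
  have hderiv : ∀ s ∈ uIcc w t, HasDerivAt f (f' s) s := fun s hs => hf s (hpos s hs)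
  have hint : IntervalIntegrable f' MeasureTheory.volume w t :=
    intervalIntegrable_deriv_of_nonneg (HasDerivAt.continuousOn hderiv)
      (fun s hs => hderiv s (Ioo_subset_Icc_self hs))
      (fun s hs => hf' s (hpos s (Ioo_subset_Icc_self hs)))
  have hint_mul : IntervalIntegrable (fun s => s * f' s) MeasureTheory.volume w t :=
    hint.continuousOn_mul continuousOn_id
  have hFTC : ∫ s in w..t, f' s = f t - f w := integral_eq_sub_of_hasDerivAt hderiv hint
  rw [hq w t hw hwt, ← hFTC, ← integral_const_mul, ← integral_const_mul]
  constructor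
  · refine integral_mono_on hwt (hint.const_mul w) hint_mul fun s hs => ?_
    exact mul_le_mul_of_nonneg_right hs.1 (hf' s (hw.trans_le hs.1))
  · refine integral_mono_on hwt hint_mul (hint.const_mul t) fun s hs => ?_
    exact mul_le_mul_of_nonneg_right hs.2 (hf' s (hw.trans_le hs.1))

end PaymentSandwich

section CESShare

variable {r α S : ℝ}

lemma hasDerivAt_rpow_div_rpow_add (hS : 0 ≤ S) {s : ℝ} (hs : 0 < s) :
    HasDerivAt (fun u : ℝ => (u ^ α / (u ^ α + S)) ^ r)
      (r * α * S * (s ^ (r * α) / (s ^ α + S) ^ (r + 1)) / s) s := by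
  have hP : 0 < s ^ α := Real.rpow_pos_of_pos hs α
  have hT : 0 < s ^ α + S := by linarith
  have hu : HasDerivAt (fun u : ℝ => u ^ α) (α * s ^ (α - 1)) s :=
    Real.hasDerivAt_rpow_const (Or.inl hs.ne')
  have hq : HasDerivAt (fun u : ℝ => u ^ α / (u ^ α + S))
      ((α * s ^ (α - 1) * (s ^ α + S) - s ^ α * (α * s ^ (α - 1))) / (s ^ α + S) ^ 2) s :=
    hu.div (hu.add_const S) hT.ne'
  convert hq.rpow_const (p := r) (Or.inl (div_pos hP hT).ne') using 1
  have e1 : (s ^ α / (s ^ α + S)) ^ (r - 1) = s ^ (α * (r - 1)) / (s ^ α + S) ^ (r - 1) := by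
    rw [Real.div_rpow hP.le hT.le, ← Real.rpow_mul hs.le]
  have e2 : s ^ (α - 1) * s ^ (α * (r - 1)) * s = s ^ (r * α) := by
    rw [← Real.rpow_add hs, ← Real.rpow_add_one hs.ne']
    ring_nf
  have e3 : (s ^ α + S) ^ (r - 1) * (s ^ α + S) ^ 2 = (s ^ α + S) ^ (r + 1) := by
    rw [← Real.rpow_natCast, ← Real.rpow_add hT]
    ring_nf
  have : (s ^ α + S) ^ (r - 1) ≠ 0 := (Real.rpow_pos_of_pos hT _).ne'
  have : (s ^ α + S) ^ (r + 1) ≠ 0 := (Real.rpow_pos_of_pos hT _).ne'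
  rw [e1]
  field_simp
  linear_combination (r * α * S * s ^ (r * α)) * e3 - (r * α * S * (s ^ α + S) ^ (r + 1)) * e2

lemma continuousOn_rpow_div_rpow_add (hr : 0 ≤ r) (hα : 0 ≤ α) (hS : 0 < S) :
    ContinuousOn (fun s : ℝ => s ^ (r * α) / (s ^ α + S) ^ (r + 1)) (Ici 0) := by
  have hden : ∀ s ∈ Ici (0 : ℝ), 0 < s ^ α + S := fun s hs =>
    add_pos_of_nonneg_of_pos (Real.rpow_nonneg hs α) hS
  refine ContinuousOn.div
    (continuousOn_id.rpow_const fun _ _ => Or.inr (mul_nonneg hr hα))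
    (((continuousOn_id.rpow_const fun _ _ => Or.inr hα).add continuousOn_const).rpow_const
      fun s hs => Or.inl (hden s hs).ne')
    fun s hs => (Real.rpow_pos_of_pos (hden s hs) _).ne'

lemma paymentSandwich_rpow_div_rpow_add (hr : 0 ≤ r) (hα : 0 < α) (hS : 0 ≤ S) :
    PaymentSandwich (fun u => (u ^ α / (u ^ α + S)) ^ r)
      (fun t => r * α * S * ∫ s in (0 : ℝ)..t, s ^ (r * α) / (s ^ α + S) ^ (r + 1)) := by
  refine PaymentSandwich.of_hasDerivAt (fun s hs => hasDerivAt_rpow_div_rpow_add hS hs)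
    (fun s hs => by positivity) fun w t hw hwt => ?_
  rcases hS.eq_or_lt with rfl | hS
  · simp
  have hint : ∀ u, 0 ≤ u → IntervalIntegrable
      (fun s : ℝ => s ^ (r * α) / (s ^ α + S) ^ (r + 1)) MeasureTheory.volume 0 u :=
    fun u hu => ((continuousOn_rpow_div_rpow_add hr hα.le hS).mono
      (by rw [uIcc_of_le hu]; exact Icc_subset_Ici_self)).intervalIntegrable
  rw [← mul_sub, integral_interval_sub_left (hint t (hw.le.trans hwt)) (hint w hw.le),
    ← integral_const_mul]
  refine integral_congr fun s hs => ?_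
  have : s ≠ 0 := (hw.trans_le (by rw [uIcc_of_le hwt] at hs; exact hs.1)).ne'
  field_simp

end CESShare

theorem stmt6_general {n : ℕ} (r ρ α : ℝ) (hr0 : 0 < r) (hr1 : r ≤ 1)
    (hρ0 : 0 < ρ) (hρ1 : ρ < 1) (hα : α = ρ / (1 - r * ρ))
    (i : Fin n) (b : Fin n → ℝ) (hb : ∀ k, k ≠ i → 0 < b k)
    (S : ℝ) (hS : S = ∑ k ∈ Finset.univ.erase i, b k ^ α)
    (x : ℝ → ℝ) (hx : ∀ t : ℝ, x t = t ^ α / (t ^ α + S))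
    (p : ℝ → ℝ)
    (hp : ∀ t : ℝ, p t = r * α * S * ∫ s in (0:ℝ)..t, s ^ (r * α) / (s ^ α + S) ^ (r + 1))
    (ptil : ℝ → ℝ)
    (htruth : ∀ w : ℝ, 0 < w → ∀ t : ℝ, 0 < t →
      w * x t ^ r - ptil t ≤ w * x w ^ r - ptil w) :
    ∃ c : ℝ, ∀ t : ℝ, 0 < t → ptil t = p t + c := by
  have hα0 : 0 < α := hα ▸ div_pos hρ0 (by nlinarith)
  have hS0 : 0 ≤ S := hS ▸ Finset.sum_nonneg fun k hk =>
    (Real.rpow_pos_of_pos (hb k (Finset.ne_of_mem_erase hk)) α).le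
  obtain rfl : x = fun t => t ^ α / (t ^ α + S) := funext hx
  obtain rfl : p = fun t => r * α * S * ∫ s in (0:ℝ)..t, s ^ (r * α) / (s ^ α + S) ^ (r + 1) :=
    funext hp
  exact (PaymentSandwich.of_truthful htruth).exists_eq_add_const
    (paymentSandwich_rpow_div_rpow_add hr0.le hα0 hS0)

theorem stmt6 {n : ℕ} (r ρ α : ℝ) (hr0 : 0 < r) (hr1 : r ≤ 1)
    (hρ0 : 0 < ρ) (hρ1 : ρ < 1) (hα : α = ρ / (1 - r * ρ))
    (i : Fin n) (b : Fin n → ℝ) (hb : ∀ k, k ≠ i → 0 < b k)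
    (S : ℝ) (hS : S = ∑ k ∈ Finset.univ.erase i, b k ^ α)
    (x : ℝ → ℝ) (hx : ∀ t : ℝ, x t = t ^ α / (t ^ α + S))
    (p : ℝ → ℝ)
    (hp : ∀ t : ℝ, p t = r * α * S * ∫ s in (0:ℝ)..t, s ^ (r * α) / (s ^ α + S) ^ (r + 1))
    (ptil : ℝ → ℝ) (hnn : ∀ t : ℝ, 0 < t → 0 ≤ ptil t)
    (htruth : ∀ w : ℝ, 0 < w → ∀ t : ℝ, 0 < t →
      w * x t ^ r - ptil t ≤ w * x w ^ r - ptil w) :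
    ∃ c : ℝ, ∀ t : ℝ, 0 < t → ptil t = p t + c :=
  stmt6_general r ρ α hr0 hr1 hρ0 hρ1 hα i b hb S hS x hx p hp ptil htruth
end

section
/- Assume each valuation v_i is concave, differentiable, and homogeneous of degree 1, let ρ ∈ (0,1], let κ > 0 be the identity-creation cost, define the pricing rule p(y) = ρ·(∑_j q_j y_j)^{1/ρ} with q_1,…,q_m the constants for which Theorem main holds (so that (x,p) is a WE for x ∈ Ψ(ρ)), and let x ∈ Ψ(ρ). Then for each agent i: if v_i(x_i)·(1−ρ) ≤ κ, then (x_i, 1) belongs to agent i's Sybil demand set D_i(p); and if v_i(x_i)·(1−ρ) > κ, then the Sybil demand set D_i(p) is empty. -/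
/-- A valid allocation. -/
def ValidAlloc {n m : ℕ} (x : Fin n → Fin m → ℝ) : Prop :=
  (∀ i, Nonneg (x i)) ∧ ∀ j, ∑ i, x i j ≤ 1

/-- Good `j` has nonzero cost under pricing rule `p`. -/
def NonzeroCost {m : ℕ} (p : (Fin m → ℝ) → ℝ) (j : Fin m) : Prop :=
  ∃ y : Fin m → ℝ, Nonneg y ∧ (∀ l, l ≠ j → y l = 0) ∧ 0 < p y

/-- `(x, p)` is a Walrasian equilibrium. -/
def IsWE {n m : ℕ} (v : Fin n → (Fin m → ℝ) → ℝ) (p : (Fin m → ℝ) → ℝ)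
    (x : Fin n → Fin m → ℝ) : Prop :=
  (∀ i, InDemand (v i) p (x i)) ∧ ValidAlloc x ∧
    ∀ j, NonzeroCost p j → ∑ i, x i j = 1

/-- CES welfare `Φ(ρ, x)`. -/
noncomputable def CES {n m : ℕ} (v : Fin n → (Fin m → ℝ) → ℝ) (ρ : ℝ)
    (x : Fin n → Fin m → ℝ) : ℝ :=
  (∑ i, v i (x i) ^ ρ) ^ (1 / ρ)

/-- `x ∈ Ψ(ρ)`. -/
def MaxCES {n m : ℕ} (v : Fin n → (Fin m → ℝ) → ℝ) (ρ : ℝ)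
    (x : Fin n → Fin m → ℝ) : Prop :=
  ValidAlloc x ∧ ∀ y, ValidAlloc y → CES v ρ y ≤ CES v ρ x

/-- Sybil utility for purchasing bundle `y` with each of `η` identities,
with identity-creation cost `κ`. -/
def SybilU {m : ℕ} (v p : (Fin m → ℝ) → ℝ) (κ : ℝ) (y : Fin m → ℝ) (η : ℕ) : ℝ :=
  v ((η : ℝ) • y) - (η : ℝ) * p y - (η : ℝ) * κ

/-- `(y, η)` is in the Sybil demand set. -/
def InSybilDemand {m : ℕ} (v p : (Fin m → ℝ) → ℝ) (κ : ℝ)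
    (y : Fin m → ℝ) (η : ℕ) : Prop :=
  Nonneg y ∧ 1 ≤ η ∧ ∀ (z : Fin m → ℝ) (μ : ℕ), Nonneg z → 1 ≤ μ →
    SybilU v p κ z μ ≤ SybilU v p κ y η

/-!
For a degree-one homogeneous valuation, buying the bundle `z` with each of `μ` identities yields
`μ · (v z - p z - κ)`, so a Sybil attack only rescales the per-identity utility. At a Walrasian
equilibrium the per-identity utility is maximised by `xᵢ`, and scaling `xᵢ` by `t` shows that the
first-order condition at `t = 1` forces `p xᵢ = ρ · v xᵢ`. Hence the best per-identity utility is
`v xᵢ (1 - ρ) - κ`: if it is nonpositive one identity is optimal, and if it is positive doubling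
the number of identities always does strictly better, so no optimum exists.
-/

lemma eq_mul_of_isLocalMax_mul_sub_rpow_mul {a b r : ℝ}
    (h : IsLocalMax (fun t : ℝ => t * a - t ^ r * b) 1) : a = r * b := by
  have hderiv : HasDerivAt (fun t : ℝ => t * a - t ^ r * b) (a - r * b) 1 := by
    have hlin : HasDerivAt (fun t : ℝ => t * a) a 1 := by
      simpa using (hasDerivAt_id (1 : ℝ)).mul_const a
    have hpow : HasDerivAt (fun t : ℝ => t ^ r * b) (r * b) 1 := by
      simpa using (Real.hasDerivAt_rpow_const (x := 1) (p := r) (Or.inl one_ne_zero)).mul_const b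
    exact hlin.sub hpow
  linarith [h.hasDerivAt_eq_zero hderiv]

lemma sybilU_eq_of_homog {m : ℕ} {v : (Fin m → ℝ) → ℝ} (hv : Homog 1 v)
    (p : (Fin m → ℝ) → ℝ) (κ : ℝ) {z : Fin m → ℝ} (hz : Nonneg z) (μ : ℕ) :
    SybilU v p κ z μ = μ * (v z - p z - κ) := by
  rw [SybilU, hv z hz μ μ.cast_nonneg, Real.rpow_one]
  ring

lemma price_smul {m : ℕ} {ρ : ℝ} {q : Fin m → ℝ} (hq : ∀ j, 0 ≤ q j)
    {p : (Fin m → ℝ) → ℝ} (hp : ∀ y, p y = ρ * (∑ j, q j * y j) ^ (1 / ρ))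
    {y : Fin m → ℝ} (hy : Nonneg y) {t : ℝ} (ht : 0 ≤ t) :
    p (t • y) = t ^ (1 / ρ) * p y := by
  have hA : 0 ≤ ∑ j, q j * y j := Finset.sum_nonneg fun j _ => mul_nonneg (hq j) (hy j)
  have hsum : ∑ j, q j * (t • y) j = t * ∑ j, q j * y j := by
    rw [Finset.mul_sum]
    exact Finset.sum_congr rfl fun j _ => by rw [Pi.smul_apply, smul_eq_mul]; ring
  rw [hp, hp, hsum, Real.mul_rpow ht hA]
  ring

lemma InDemand.price_eq_of_homog {m : ℕ} {v : (Fin m → ℝ) → ℝ} (hv : Homog 1 v)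
    {ρ : ℝ} (hρ : ρ ≠ 0) {q : Fin m → ℝ} (hq : ∀ j, 0 ≤ q j)
    {p : (Fin m → ℝ) → ℝ} (hp : ∀ y, p y = ρ * (∑ j, q j * y j) ^ (1 / ρ))
    {y : Fin m → ℝ} (hy : InDemand v p y) : p y = ρ * v y := by
  have hmax : IsLocalMax (fun t : ℝ => t * v y - t ^ (1 / ρ) * p y) 1 := by
    filter_upwards [Ici_mem_nhds zero_lt_one] with t (ht : 0 ≤ t)
    have hdem := hy.2 (t • y) fun j => mul_nonneg ht (hy.1 j)
    rw [hv y hy.1 t ht, Real.rpow_one, price_smul hq hp hy.1 ht] at hdem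
    simpa using hdem
  rw [eq_mul_of_isLocalMax_mul_sub_rpow_mul hmax]
  field_simp

lemma InDemand.inSybilDemand_one {m : ℕ} {v p : (Fin m → ℝ) → ℝ} (hv : Homog 1 v) {κ : ℝ}
    {y : Fin m → ℝ} (hy : InDemand v p y) (hκ : v y - p y ≤ κ) :
    InSybilDemand v p κ y 1 := by
  refine ⟨hy.1, le_rfl, fun z μ hz hμ => ?_⟩
  rw [sybilU_eq_of_homog hv p κ hz, sybilU_eq_of_homog hv p κ hy.1, Nat.cast_one]
  have hμ1 : (1 : ℝ) ≤ μ := by exact_mod_cast hμ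
  nlinarith [hy.2 z hz]

lemma InDemand.not_inSybilDemand {m : ℕ} {v p : (Fin m → ℝ) → ℝ} (hv : Homog 1 v) {κ : ℝ}
    {y : Fin m → ℝ} (hy : InDemand v p y) (hκ : κ < v y - p y) (z : Fin m → ℝ) (η : ℕ) :
    ¬ InSybilDemand v p κ z η := by
  rintro ⟨hz, hη, hopt⟩
  have hdouble := hopt y (2 * η) hy.1 (by omega)
  rw [sybilU_eq_of_homog hv p κ hy.1, sybilU_eq_of_homog hv p κ hz] at hdouble
  have hη1 : (1 : ℝ) ≤ η := by exact_mod_cast hη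
  push_cast at hdouble
  nlinarith [hy.2 z hz]

theorem stmt7_general {n m : ℕ} (v : Fin n → (Fin m → ℝ) → ℝ) (ρ κ : ℝ)
    (hρ0 : 0 < ρ)
    (hhom : ∀ i, Homog 1 (v i))
    (q : Fin m → ℝ) (hq : ∀ j, 0 ≤ q j)
    (p : (Fin m → ℝ) → ℝ) (hp : ∀ y, p y = ρ * (∑ j, q j * y j) ^ (1 / ρ))
    (x : Fin n → Fin m → ℝ) (hwe : IsWE v p x) :
    ∀ i,
      (v i (x i) * (1 - ρ) ≤ κ → InSybilDemand (v i) p κ (x i) 1) ∧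
      (κ < v i (x i) * (1 - ρ) →
        ∀ (y : Fin m → ℝ) (η : ℕ), ¬ InSybilDemand (v i) p κ y η) := by
  intro i
  have hdem := hwe.1 i
  have hsurplus : v i (x i) - p (x i) = v i (x i) * (1 - ρ) := by
    rw [hdem.price_eq_of_homog (hhom i) hρ0.ne' hq hp]
    ring
  exact ⟨fun hle => hdem.inSybilDemand_one (hhom i) (hsurplus ▸ hle),
    fun hgt => hdem.not_inSybilDemand (hhom i) (hsurplus ▸ hgt)⟩

theorem stmt7 {n m : ℕ} (v : Fin n → (Fin m → ℝ) → ℝ) (ρ κ : ℝ)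
    (hρ0 : 0 < ρ) (hρ1 : ρ ≤ 1) (hκ : 0 < κ)
    (hnz : ∀ i, NonzeroVal (v i)) (hmono : ∀ i, MonotoneVal (v i))
    (hnorm : ∀ i, v i 0 = 0)
    (hhom : ∀ i, Homog 1 (v i))
    (hconc : ∀ i, ConcaveOn ℝ {y : Fin m → ℝ | Nonneg y} (v i))
    (hdiff : ∀ i, DiffVal (v i))
    (q : Fin m → ℝ) (hq : ∀ j, 0 ≤ q j)
    (p : (Fin m → ℝ) → ℝ) (hp : ∀ y, p y = ρ * (∑ j, q j * y j) ^ (1 / ρ))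
    (x : Fin n → Fin m → ℝ) (hmax : MaxCES v ρ x) (hwe : IsWE v p x) :
    ∀ i,
      (v i (x i) * (1 - ρ) ≤ κ → InSybilDemand (v i) p κ (x i) 1) ∧
      (κ < v i (x i) * (1 - ρ) →
        ∀ (y : Fin m → ℝ) (η : ℕ), ¬ InSybilDemand (v i) p κ y η) :=
  stmt7_general v ρ κ hρ0 hhom q hq p hp x hwe
end

section
/- Linear pricing poorly approximates CES welfare: let m = 1, ρ ∈ (0,1], ε > 0, v_1(x) = (1+ε)·x, and v_i(x) = x for all i ≠ 1. If (x, p) is a Walrasian equilibrium where p is a linear pricing rule, then Φ(ρ, x) / max_y Φ(ρ, y) ≤ (1+ε)/n^{1/ρ − 1}, where the maximum is over valid allocations y. -/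
/-- `y` is in the quasilinear demand set (single good). -/
def InDemand1 (v p : ℝ → ℝ) (y : ℝ) : Prop :=
  0 ≤ y ∧ ∀ z : ℝ, 0 ≤ z → v z - p z ≤ v y - p y

/-- `(x, p)` is a Walrasian equilibrium for a single good. -/
def IsWE1 {n : ℕ} (v : Fin n → ℝ → ℝ) (p : ℝ → ℝ) (x : Fin n → ℝ) : Prop :=
  (∀ i, InDemand1 (v i) p (x i)) ∧ Valid1 x ∧
    ((∃ y : ℝ, 0 ≤ y ∧ 0 < p y) → ∑ i, x i = 1)

/-! With a linear price `q`, agent `0` has a demand only if `q ≥ 1 + ε` (otherwise buying more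
always pays off). Then `q > 1`, so the other agents demand nothing, while the positive price
forces the market to clear: agent `0` receives the whole good and the welfare is `1 + ε`.
The equal split, on the other hand, already has welfare at least `(n + 1) ^ (1 / ρ - 1)`. -/

open Finset

section Demand

variable {v : ℝ → ℝ} {a q y : ℝ}

lemma le_of_inDemand1_linear (hv : ∀ t, v t = a * t) (hy : InDemand1 v (fun t => q * t) y) :
    a ≤ q := by
  have h := hy.2 (y + 1) (by linarith [hy.1])
  simp only [hv] at h
  nlinarith

lemma eq_zero_of_inDemand1_linear (hv : ∀ t, v t = a * t) (haq : a < q)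
    (hy : InDemand1 v (fun t => q * t) y) : y = 0 := by
  have h := hy.2 0 le_rfl
  simp only [hv] at h
  nlinarith [hy.1]

end Demand

section Welfare

variable {m : ℕ} {ρ : ℝ}

lemma CES1_eq_of_eq_zero_of_ne {v : Fin m → ℝ → ℝ} {x : Fin m → ℝ} (hρ : 0 < ρ) {j : Fin m}
    (hj : 0 ≤ v j (x j)) (hzero : ∀ i, i ≠ j → v i (x i) = 0) :
    CES1 v ρ x = v j (x j) := by
  have hsum : ∑ i, v i (x i) ^ ρ = v j (x j) ^ ρ :=
    Fintype.sum_eq_single j fun i hi => by rw [hzero i hi, Real.zero_rpow hρ.ne']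
  rw [CES1, hsum, ← Real.rpow_mul hj, mul_one_div_cancel hρ.ne', Real.rpow_one]

lemma CES1_mono {v w : Fin m → ℝ → ℝ} {x y : Fin m → ℝ} (hρ : 0 < ρ)
    (hnonneg : ∀ i, 0 ≤ v i (x i)) (hle : ∀ i, v i (x i) ≤ w i (y i)) :
    CES1 v ρ x ≤ CES1 w ρ y := by
  unfold CES1
  gcongr with i
  · exact sum_nonneg fun i _ => Real.rpow_nonneg (hnonneg i) ρ
  · exact hnonneg i
  · exact hle i

lemma CES1_id_const (hρ : 0 < ρ) {c : ℝ} (hc : 0 ≤ c) :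
    CES1 (fun (_ : Fin m) t => t) ρ (fun _ => c) = (m : ℝ) ^ (1 / ρ) * c := by
  rw [CES1, sum_const, card_univ, Fintype.card_fin, nsmul_eq_mul,
    Real.mul_rpow (Nat.cast_nonneg m) (Real.rpow_nonneg hc ρ), ← Real.rpow_mul hc,
    mul_one_div_cancel hρ.ne', Real.rpow_one]

lemma valid1_uniform (hm : 0 < m) : Valid1 (fun _ : Fin m => (m : ℝ)⁻¹) := by
  refine ⟨fun _ => by positivity, ?_⟩
  rw [sum_const, card_univ, Fintype.card_fin, nsmul_eq_mul, mul_inv_cancel₀ (by positivity)]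

lemma rpow_le_CES1_uniform {v : Fin m → ℝ → ℝ} (hρ : 0 < ρ) (hm : 0 < m)
    (hv : ∀ i, (m : ℝ)⁻¹ ≤ v i (m : ℝ)⁻¹) :
    (m : ℝ) ^ (1 / ρ - 1) ≤ CES1 v ρ (fun _ => (m : ℝ)⁻¹) := by
  have hm' : (0 : ℝ) < m := by exact_mod_cast hm
  calc (m : ℝ) ^ (1 / ρ - 1) = CES1 (fun _ t => t) ρ (fun _ => (m : ℝ)⁻¹) := by
        rw [CES1_id_const hρ (by positivity), Real.rpow_sub hm', Real.rpow_one, div_eq_mul_inv]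
    _ ≤ CES1 v ρ (fun _ => (m : ℝ)⁻¹) := CES1_mono hρ (fun _ => by positivity) hv

end Welfare

/-- `sSup` of a set of reals that is not bounded above is `0`, so there the ratio is `0`. -/
lemma div_sSup_le_div_of_le_mem {S : Set ℝ} {a b c : ℝ} (ha : 0 ≤ a) (hb : 0 < b) (hbc : b ≤ c)
    (hc : c ∈ S) : a / sSup S ≤ a / b := by
  by_cases hS : BddAbove S
  · exact div_le_div_of_nonneg_left ha hb (hbc.trans (le_csSup hS hc))
  · rw [Real.sSup_of_not_bddAbove hS, div_zero]
    exact div_nonneg ha hb.le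

theorem stmt11_general {n : ℕ} (ρ ε : ℝ) (hρ0 : 0 < ρ) (hε : 0 < ε)
    (v : Fin (n + 1) → ℝ → ℝ)
    (hv0 : ∀ t, v 0 t = (1 + ε) * t) (hvi : ∀ i, i ≠ 0 → ∀ t, v i t = t)
    (q : ℝ)
    (x : Fin (n + 1) → ℝ) (hwe : IsWE1 v (fun t => q * t) x) :
    CES1 v ρ x / sSup {c : ℝ | ∃ y, Valid1 y ∧ c = CES1 v ρ y}
      ≤ (1 + ε) / ((n : ℝ) + 1) ^ (1 / ρ - 1) := by
  obtain ⟨hdemand, -, hclears⟩ := hwe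
  have hq : 1 + ε ≤ q := le_of_inDemand1_linear hv0 (hdemand 0)
  have hzero : ∀ i, i ≠ 0 → x i = 0 := fun i hi =>
    eq_zero_of_inDemand1_linear (a := 1) (fun t => by rw [hvi i hi, one_mul]) (by linarith)
      (hdemand i)
  have hx0 : x 0 = 1 := by
    rw [← hclears ⟨1, zero_le_one, by linarith⟩, Fintype.sum_eq_single 0 hzero]
  have hwelfare : CES1 v ρ x = 1 + ε := by
    rw [CES1_eq_of_eq_zero_of_ne hρ0 (j := 0) (by rw [hv0, hx0]; linarith)
      (fun i hi => by rw [hvi i hi, hzero i hi]), hv0, hx0, mul_one]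
  have huniform := rpow_le_CES1_uniform (m := n + 1) (v := v) hρ0 n.succ_pos fun i => by
    by_cases hi : i = 0
    · subst hi; rw [hv0]; exact le_mul_of_one_le_left (by positivity) (by linarith)
    · rw [hvi i hi]
  push_cast at huniform
  rw [hwelfare]
  exact div_sSup_le_div_of_le_mem (by linarith) (by positivity) huniform
    ⟨_, valid1_uniform n.succ_pos, by push_cast; rfl⟩

theorem stmt11 {n : ℕ} (ρ ε : ℝ) (hρ0 : 0 < ρ) (hρ1 : ρ ≤ 1) (hε : 0 < ε)
    (v : Fin (n + 1) → ℝ → ℝ)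
    (hv0 : ∀ t, v 0 t = (1 + ε) * t) (hvi : ∀ i, i ≠ 0 → ∀ t, v i t = t)
    (q : ℝ) (hq : 0 ≤ q)
    (x : Fin (n + 1) → ℝ) (hwe : IsWE1 v (fun t => q * t) x) :
    CES1 v ρ x / sSup {c : ℝ | ∃ y, Valid1 y ∧ c = CES1 v ρ y}
      ≤ (1 + ε) / ((n : ℝ) + 1) ^ (1 / ρ - 1) :=
  stmt11_general ρ ε hρ0 hε v hv0 hvi q x hwe
end

section
/- Let n = 2, m = 1, v_1(x) = x, and v_2(x) = √(2x) for x ∈ ℝ_{≥0}. Then for every ρ ∈ (0,1), there exists no allocation x ∈ Ψ(ρ) and no pricing rule p : ℝ_{≥0} → ℝ_{≥0} such that (x, p) is a Walrasian equilibrium. (In particular, CES welfare maximization cannot be implemented in WE when agents' valuations have different homogeneity degrees.) -/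
/-!
Adding the two agents' demand inequalities at each other's bundles gives, in any Walrasian
equilibrium, `x₂ + √(2x₁) ≤ x₁ + √(2x₂)`. Writing `2x₁ = s²`, `2x₂ = r²`, this is
`(s - r)(s + r - 2) ≥ 0`, while `x₁ + x₂ ≤ 1` gives `s + r < 2` unless `s = r`; so `x₁ ≤ x₂`.
CES welfare maximization, in contrast, allocates the whole good and gives the linear agent
more than half of it: along the budget line the derivative of `t^ρ + (2(1 - t))^(ρ/2)` is
positive on `(0, 1/2]`, since `t^(ρ-1) > 1 ≥ (2(1 - t))^(ρ/2-1)` there.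
-/

open Set

lemma InDemand1.add_le_add {f g p : ℝ → ℝ} {a b : ℝ} (ha : InDemand1 f p a)
    (hb : InDemand1 g p b) : f b + g a ≤ f a + g b := by
  linarith [ha.2 b hb.1, hb.2 a ha.1]

lemma IsWE1.swap_le {n : ℕ} {v : Fin n → ℝ → ℝ} {p : ℝ → ℝ} {x : Fin n → ℝ}
    (h : IsWE1 v p x) (i j : Fin n) : v i (x j) + v j (x i) ≤ v i (x i) + v j (x j) :=
  (h.1 i).add_le_add (h.1 j)

lemma MaxCES1.sum_eq_one {n : ℕ} {v : Fin n → ℝ → ℝ} {ρ : ℝ} {x : Fin n → ℝ}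
    (hx : MaxCES1 v ρ x) (hρ : 0 < ρ) (hv_nonneg : ∀ i t, 0 ≤ t → 0 ≤ v i t)
    (hv_mono : ∀ i, MonotoneOn (v i) (Ici 0)) (j : Fin n) (hj : StrictMonoOn (v j) (Ici 0)) :
    ∑ i, x i = 1 := by
  obtain ⟨⟨hx_nonneg, hx_sum⟩, hx_max⟩ := hx
  by_contra hne
  set y : Fin n → ℝ := x + Pi.single j (1 - ∑ i, x i)
  have hslack : 0 < 1 - ∑ i, x i := sub_pos.2 (lt_of_le_of_ne hx_sum hne)
  have hxy : ∀ i, x i ≤ y i := fun i => by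
    rcases eq_or_ne i j with rfl | hij <;> simp [y, *, hslack.le]
  have hy_nonneg : ∀ i, 0 ≤ y i := fun i => (hx_nonneg i).trans (hxy i)
  have hy_valid : Valid1 y := ⟨hy_nonneg, by simp [y, Finset.sum_add_distrib]⟩
  have hterm : ∀ i, v i (x i) ^ ρ ≤ v i (y i) ^ ρ := fun i =>
    Real.rpow_le_rpow (hv_nonneg i _ (hx_nonneg i))
      (hv_mono i (hx_nonneg i) (hy_nonneg i) (hxy i)) hρ.le
  have hterm_j : v j (x j) ^ ρ < v j (y j) ^ ρ :=
    Real.rpow_lt_rpow (hv_nonneg j _ (hx_nonneg j))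
      (hj (hx_nonneg j) (hy_nonneg j) (by simp [y, hslack])) hρ
  have hsum_lt : ∑ i, v i (x i) ^ ρ < ∑ i, v i (y i) ^ ρ :=
    Finset.sum_lt_sum (fun i _ => hterm i) ⟨j, Finset.mem_univ j, hterm_j⟩
  have hlt : CES1 v ρ x < CES1 v ρ y :=
    Real.rpow_lt_rpow (Finset.sum_nonneg fun i _ => Real.rpow_nonneg
      (hv_nonneg i _ (hx_nonneg i)) ρ) hsum_lt (by positivity)
  exact (hx_max y hy_valid).not_gt hlt

lemma sub_sqrt_two_mul_lt {a b : ℝ} (hb : 0 ≤ b) (hba : b < a) (hab : a + b ≤ 1) :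
    a - √(2 * a) < b - √(2 * b) := by
  set s := √(2 * a)
  set r := √(2 * b)
  have hs : s ^ 2 = 2 * a := Real.sq_sqrt (by linarith)
  have hr : r ^ 2 = 2 * b := Real.sq_sqrt (by linarith)
  have hrs : r < s := Real.sqrt_lt_sqrt (by linarith) (by linarith)
  have hr_nonneg : 0 ≤ r := Real.sqrt_nonneg _
  have hsum : s + r < 2 := by nlinarith [sq_nonneg (s - r)]
  nlinarith [mul_pos (sub_pos.2 hrs) (sub_pos.2 hsum)]

/-- `Φ(ρ, (t, 1 - t))^ρ` for the valuations `t` and `√(2t)`. -/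
noncomputable def cesLine (ρ t : ℝ) : ℝ := t ^ ρ + (2 * (1 - t)) ^ (ρ / 2)

section cesLine

variable {ρ : ℝ}

lemma cesLine_nonneg {t : ℝ} (ht : t ∈ Icc 0 1) : 0 ≤ cesLine ρ t :=
  add_nonneg (Real.rpow_nonneg ht.1 _) (Real.rpow_nonneg (by linarith [ht.2]) _)

lemma continuous_cesLine (hρ : 0 < ρ) : Continuous (cesLine ρ) :=
  (Real.continuous_rpow_const hρ.le).add
    ((Real.continuous_rpow_const (by positivity)).comp (by fun_prop))

lemma hasDerivAt_cesLine {t : ℝ} (ht0 : 0 < t) (ht1 : t < 1) :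
    HasDerivAt (cesLine ρ) (ρ * t ^ (ρ - 1) - ρ * (2 * (1 - t)) ^ (ρ / 2 - 1)) t := by
  have hline : HasDerivAt (fun s : ℝ => 2 * (1 - s)) (-2) t := by
    simpa using ((hasDerivAt_id t).const_sub 1).const_mul 2
  exact ((Real.hasDerivAt_rpow_const (p := ρ) (Or.inl ht0.ne')).add
    (hline.rpow_const (p := ρ / 2) (Or.inl (by linarith)))).congr_deriv (by ring)

lemma deriv_cesLine_pos (hρ0 : 0 < ρ) (hρ1 : ρ < 1) {t : ℝ} (ht0 : 0 < t) (ht : t ≤ 1 / 2) :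
    0 < deriv (cesLine ρ) t := by
  rw [(hasDerivAt_cesLine ht0 (by linarith)).deriv]
  have hleft : 1 < t ^ (ρ - 1) :=
    Real.one_lt_rpow_of_pos_of_lt_one_of_neg ht0 (by linarith) (by linarith)
  have hright : (2 * (1 - t)) ^ (ρ / 2 - 1) ≤ 1 :=
    Real.rpow_le_one_of_one_le_of_nonpos (by linarith) (by linarith)
  nlinarith

lemma strictMonoOn_cesLine (hρ0 : 0 < ρ) (hρ1 : ρ < 1) :
    StrictMonoOn (cesLine ρ) (Icc 0 (1 / 2)) := by
  refine strictMonoOn_of_deriv_pos (convex_Icc _ _) (continuous_cesLine hρ0).continuousOn ?_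
  rw [interior_Icc]
  exact fun t ht => deriv_cesLine_pos hρ0 hρ1 ht.1 ht.2.le

lemma half_lt_of_isMaxOn_cesLine (hρ0 : 0 < ρ) (hρ1 : ρ < 1) {t : ℝ}
    (hmax : IsMaxOn (cesLine ρ) (Icc 0 1) t) (ht : t ∈ Icc 0 1) : 1 / 2 < t := by
  by_contra! hle
  rcases hle.lt_or_eq with hlt | rfl
  · have := strictMonoOn_cesLine hρ0 hρ1 ⟨ht.1, hle⟩ ⟨by norm_num, le_rfl⟩ hlt
    exact this.not_ge (hmax ⟨by norm_num, by norm_num⟩)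
  · have hzero := (hmax.isLocalMax (Icc_mem_nhds (by norm_num) (by norm_num))).deriv_eq_zero
    exact (deriv_cesLine_pos hρ0 hρ1 (by norm_num) le_rfl).ne' hzero

variable {v : Fin 2 → ℝ → ℝ} (hv0 : ∀ t, v 0 t = t) (hv1 : ∀ t, v 1 t = √(2 * t))
include hv0 hv1

lemma CES1_eq_cesLine {y : Fin 2 → ℝ} (hy : y 0 + y 1 = 1) (hy1 : 0 ≤ y 1) :
    CES1 v ρ y = cesLine ρ (y 0) ^ (1 / ρ) := by
  rw [CES1, Fin.sum_univ_two, hv0, hv1, Real.sqrt_eq_rpow, ← Real.rpow_mul (by linarith),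
    cesLine, show 1 - y 0 = y 1 by linarith, one_div_mul_eq_div]

lemma MaxCES1.isMaxOn_cesLine {x : Fin 2 → ℝ} (hx : MaxCES1 v ρ x) (hρ : 0 < ρ)
    (hsum : x 0 + x 1 = 1) : IsMaxOn (cesLine ρ) (Icc 0 1) (x 0) := by
  intro t ht
  have hvalid : Valid1 ![t, 1 - t] :=
    ⟨fun i => by fin_cases i <;> simp [ht.1, ht.2], by simp [Fin.sum_univ_two]⟩
  have hle := hx.2 _ hvalid
  rw [CES1_eq_cesLine hv0 hv1 (by simp) (by simp [ht.2]),
    CES1_eq_cesLine hv0 hv1 hsum (hx.1.1 1)] at hle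
  exact (Real.rpow_le_rpow_iff (cesLine_nonneg ht)
    (cesLine_nonneg ⟨hx.1.1 0, by linarith [hx.1.1 1]⟩) (by positivity)).1 hle

end cesLine

theorem stmt12 (ρ : ℝ) (hρ0 : 0 < ρ) (hρ1 : ρ < 1)
    (v : Fin 2 → ℝ → ℝ)
    (hv0 : ∀ t, v 0 t = t) (hv1 : ∀ t, v 1 t = Real.sqrt (2 * t)) :
    ¬ ∃ (x : Fin 2 → ℝ) (p : ℝ → ℝ),
        (∀ t : ℝ, 0 ≤ t → 0 ≤ p t) ∧ MaxCES1 v ρ x ∧ IsWE1 v p x := by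
  rintro ⟨x, p, -, hmax, hwe⟩
  have hv_nonneg : ∀ i t, 0 ≤ t → 0 ≤ v i t := fun i t ht => by
    fin_cases i <;> simp [hv0, hv1, ht]
  have hv_mono : ∀ i, MonotoneOn (v i) (Ici 0) := fun i a _ b _ hab => by
    fin_cases i
    · simpa [hv0] using hab
    · simpa [hv1] using Real.sqrt_le_sqrt (by linarith)
  have hsum : x 0 + x 1 = 1 := by
    simpa [Fin.sum_univ_two] using hmax.sum_eq_one hρ0 hv_nonneg hv_mono 0
      fun a _ b _ hab => by simpa [hv0] using hab
  have hhalf : 1 / 2 < x 0 := half_lt_of_isMaxOn_cesLine hρ0 hρ1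
    (hmax.isMaxOn_cesLine hv0 hv1 hρ0 hsum) ⟨hmax.1.1 0, by linarith [hmax.1.1 1]⟩
  have hswap := hwe.swap_le 0 1
  rw [hv0, hv0, hv1, hv1] at hswap
  linarith [sub_sqrt_two_mul_lt (hmax.1.1 1) (by linarith) hsum.le]
end

section
/- Let n = 2, m = 1, v_1(x) = x, and v_2(x) = 2x. Then for every ρ < 0, there is no pricing rule p : ℝ_{≥0} → ℝ_{≥0} and allocation x ∈ Ψ(ρ) such that (x, p) is a Walrasian equilibrium. -/
/-- `x ∈ Ψ(ρ)` for ρ < 0: a valid allocation with strictly positive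
valuations maximizing CES welfare among all such allocations. -/
def MaxCES1neg {n : ℕ} (v : Fin n → ℝ → ℝ) (ρ : ℝ) (x : Fin n → ℝ) : Prop :=
  Valid1 x ∧ (∀ i, 0 < v i (x i)) ∧
    ∀ y, Valid1 y → (∀ i, 0 < v i (y i)) → CES1 v ρ y ≤ CES1 v ρ x

/-! A Walrasian equilibrium for these valuations must give the weaker agent no more than the
stronger one: comparing the two demand inequalities at a common price rule gives
`x₁ - x₀ ≥ 2 x₁ - 2 x₀`, i.e. `x₀ ≤ x₁`. A CES maximizer does the opposite. For `ρ < 0`,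
maximizing `Φ` means minimizing `x₀ ^ ρ + (2 x₁) ^ ρ`, and moving a little of the good from
agent 1 to agent 0 keeps the allocation valid, so Fermat's rule gives the first-order condition
`x₀ ^ (ρ - 1) = 2 ^ ρ x₁ ^ (ρ - 1) < x₁ ^ (ρ - 1)`, whence `x₁ < x₀`. -/

lemma InDemand1.sub_le_sub {v w p : ℝ → ℝ} {y z : ℝ} (hy : InDemand1 v p y)
    (hz : InDemand1 w p z) : w y - w z ≤ v y - v z := by
  have := hy.2 z hz.1
  have := hz.2 y hy.1
  linarith

lemma MaxCES1neg.sum_rpow_le {n : ℕ} [NeZero n] {v : Fin n → ℝ → ℝ} {ρ : ℝ} {x y : Fin n → ℝ}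
    (hρ : ρ < 0) (hx : MaxCES1neg v ρ x) (hy : Valid1 y) (hypos : ∀ i, 0 < v i (y i)) :
    ∑ i, v i (x i) ^ ρ ≤ ∑ i, v i (y i) ^ ρ := by
  by_contra! hlt
  have hpos : 0 < ∑ i, v i (y i) ^ ρ :=
    Finset.sum_pos (fun i _ ↦ Real.rpow_pos_of_pos (hypos i) ρ) Finset.univ_nonempty
  exact (hx.2.2 y hy hypos).not_gt (Real.rpow_lt_rpow_of_neg hpos hlt (one_div_neg.2 hρ))

lemma MaxCES1neg.isLocalMin_transfer {ρ c : ℝ} {v : Fin 2 → ℝ → ℝ} {x : Fin 2 → ℝ}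
    (hρ : ρ < 0) (hv0 : ∀ t, v 0 t = t) (hv1 : ∀ t, v 1 t = c * t) (hc : 0 < c)
    (hx : MaxCES1neg v ρ x) :
    IsLocalMin (fun t ↦ (x 0 + t) ^ ρ + (c * (x 1 - t)) ^ ρ) 0 := by
  have hx0 : 0 < x 0 := hv0 (x 0) ▸ hx.2.1 0
  have hx1 : 0 < x 1 := pos_of_mul_pos_right (hv1 (x 1) ▸ hx.2.1 1) hc.le
  filter_upwards [Ioo_mem_nhds (neg_neg_of_pos hx0) hx1] with t ht
  have hsum : x 0 + x 1 ≤ 1 := by simpa [Fin.sum_univ_two] using hx.1.2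
  have hvalid : Valid1 ![x 0 + t, x 1 - t] := by
    refine ⟨Fin.forall_fin_two.2 ⟨?_, ?_⟩, ?_⟩ <;>
      simp only [Fin.sum_univ_two, Matrix.cons_val_zero, Matrix.cons_val_one] <;>
      linarith [ht.1, ht.2]
  have hpos : ∀ i, 0 < v i (![x 0 + t, x 1 - t] i) := by
    refine Fin.forall_fin_two.2 ⟨?_, ?_⟩ <;>
      simp only [Matrix.cons_val_zero, Matrix.cons_val_one, hv0, hv1]
    · linarith [ht.1]
    · exact mul_pos hc (by linarith [ht.2])
  simpa [Fin.sum_univ_two, hv0, hv1] using hx.sum_rpow_le hρ hvalid hpos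

lemma lt_of_isLocalMin_transfer {ρ c a b : ℝ} (hρ : ρ < 0) (hc : 1 < c) (ha : 0 < a) (hb : 0 < b)
    (hmin : IsLocalMin (fun t ↦ (a + t) ^ ρ + (c * (b - t)) ^ ρ) 0) : b < a := by
  have hc0 : 0 < c := one_pos.trans hc
  have hderiv : HasDerivAt (fun t ↦ (a + t) ^ ρ + (c * (b - t)) ^ ρ)
      (1 * ρ * (a + 0) ^ (ρ - 1) + c * (-1) * ρ * (c * (b - 0)) ^ (ρ - 1)) 0 :=
    (((hasDerivAt_id 0).const_add a).rpow_const (Or.inl (by simpa using ha.ne'))).add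
      ((((hasDerivAt_id 0).const_sub b).const_mul c).rpow_const
        (Or.inl (by simpa using (mul_pos hc0 hb).ne')))
  have hfoc : a ^ (ρ - 1) = c ^ ρ * b ^ (ρ - 1) := by
    have h := hmin.hasDerivAt_eq_zero hderiv
    rw [add_zero, sub_zero, Real.mul_rpow hc0.le hb.le, Real.rpow_sub_one hc0.ne'] at h
    field_simp at h
    linarith [(mul_eq_zero.1 h).resolve_left hρ.ne]
  by_contra! hab
  have hcρ : c ^ ρ < 1 := Real.rpow_lt_one_of_one_lt_of_neg hc hρ
  have hbρ : 0 < b ^ (ρ - 1) := Real.rpow_pos_of_pos hb _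
  have hmono : b ^ (ρ - 1) ≤ a ^ (ρ - 1) := Real.rpow_le_rpow_of_nonpos ha hab (by linarith)
  nlinarith

theorem stmt13 (ρ : ℝ) (hρ : ρ < 0)
    (v : Fin 2 → ℝ → ℝ)
    (hv0 : ∀ t, v 0 t = t) (hv1 : ∀ t, v 1 t = 2 * t) :
    ¬ ∃ (x : Fin 2 → ℝ) (p : ℝ → ℝ),
        (∀ t : ℝ, 0 ≤ t → 0 ≤ p t) ∧ MaxCES1neg v ρ x ∧ IsWE1 v p x := by
  rintro ⟨x, p, -, hmax, hdem, -, -⟩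
  have hx0 : 0 < x 0 := hv0 (x 0) ▸ hmax.2.1 0
  have hx1 : 0 < x 1 := by linarith [hv1 (x 1) ▸ hmax.2.1 1]
  have hwe : x 0 ≤ x 1 := by
    have := (hdem 0).sub_le_sub (hdem 1)
    simp only [hv0, hv1] at this
    linarith
  have hces : x 1 < x 0 := lt_of_isLocalMin_transfer hρ one_lt_two hx0 hx1
    (hmax.isLocalMin_transfer hρ hv0 hv1 two_pos)
  linarith
end

section
/- Let n = 2, m = 1, v_1(x) = x, and v_2(x) = 2x. Then there is no allocation x maximizing Nash welfare (the product v_1(x_1)·v_2(x_2) over valid allocations) and no differentiable pricing rule p : ℝ_{≥0} → ℝ_{≥0} such that (x, p) is a Walrasian equilibrium. -/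
/-- `x` maximizes Nash welfare (the product of the two agents' valuations)
over valid allocations. -/
def MaxNash (v : Fin 2 → ℝ → ℝ) (x : Fin 2 → ℝ) : Prop :=
  Valid1 x ∧ ∀ y : Fin 2 → ℝ, Valid1 y →
    v 0 (y 0) * v 1 (y 1) ≤ v 0 (x 0) * v 1 (x 1)

/-! Maximizing `x₀ · 2x₁` over `x₀ + x₁ ≤ 1` forces the interior split `(1/2, 1/2)`.
There each agent's demand problem has the first-order condition `v_i'(1/2) = p'(1/2)`,
so `p'(1/2)` would equal both `1` and `2`. -/

theorem InDemand1.hasDerivAt_eq {v p : ℝ → ℝ} {y a b : ℝ} (h : InDemand1 v p y) (hy : 0 < y)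
    (hv : HasDerivAt v a y) (hp : HasDerivAt p b y) : a = b := by
  have hmax : IsLocalMax (fun z => v z - p z) y := by
    filter_upwards [Ici_mem_nhds hy] with z hz using h.2 z hz
  exact sub_eq_zero.mp (hmax.hasDerivAt_eq_zero (hv.sub hp))

theorem eq_half_of_add_le_one_of_quarter_le_mul {a b : ℝ} (ha : 0 ≤ a) (hb : 0 ≤ b)
    (hab : a + b ≤ 1) (h : 1 / 4 ≤ a * b) : a = 1 / 2 ∧ b = 1 / 2 := by
  have hsum : a + b = 1 := by nlinarith [sq_nonneg (a - b)]
  constructor <;> nlinarith [sq_nonneg (a - b)]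

theorem MaxNash.eq_half_of_linear {v : Fin 2 → ℝ → ℝ} {x : Fin 2 → ℝ} {c₀ c₁ : ℝ}
    (h : MaxNash v x) (hc₀ : 0 < c₀) (hc₁ : 0 < c₁)
    (hv₀ : ∀ t, v 0 t = c₀ * t) (hv₁ : ∀ t, v 1 t = c₁ * t) :
    x 0 = 1 / 2 ∧ x 1 = 1 / 2 := by
  obtain ⟨⟨hx, hsum⟩, hopt⟩ := h
  have hhalf : Valid1 (fun _ : Fin 2 => (1 / 2 : ℝ)) :=
    ⟨fun _ => by norm_num, by norm_num [Fin.sum_univ_two]⟩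
  have hcmp := hopt _ hhalf
  simp only [hv₀, hv₁] at hcmp
  refine eq_half_of_add_le_one_of_quarter_le_mul (hx 0) (hx 1)
    (by simpa [Fin.sum_univ_two] using hsum) ?_
  have hc : 0 < c₀ * c₁ := mul_pos hc₀ hc₁
  nlinarith

theorem stmt14 (v : Fin 2 → ℝ → ℝ)
    (hv0 : ∀ t, v 0 t = t) (hv1 : ∀ t, v 1 t = 2 * t) :
    ¬ ∃ (x : Fin 2 → ℝ) (p : ℝ → ℝ),
        (∀ t : ℝ, 0 ≤ t → 0 ≤ p t) ∧
        (∀ t : ℝ, 0 ≤ t → DifferentiableWithinAt ℝ p (Set.Ici 0) t) ∧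
        MaxNash v x ∧ IsWE1 v p x := by
  rintro ⟨x, p, -, hdiff, hmax, hdem, -⟩
  obtain ⟨hx0, hx1⟩ := hmax.eq_half_of_linear one_pos two_pos
    (fun t => (hv0 t).trans (one_mul t).symm) hv1
  have hp : HasDerivAt p (deriv p (1 / 2)) (1 / 2) :=
    ((hdiff _ (by norm_num)).differentiableAt (Ici_mem_nhds (by norm_num))).hasDerivAt
  have hv0' : HasDerivAt (v 0) 1 (1 / 2) := by
    rw [funext hv0]
    exact hasDerivAt_id' _
  have hv1' : HasDerivAt (v 1) 2 (1 / 2) := by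
    rw [funext hv1]
    simpa using (hasDerivAt_id (1 / 2 : ℝ)).const_mul 2
  have h1 : (1 : ℝ) = deriv p (1 / 2) := (hx0 ▸ hdem 0).hasDerivAt_eq (by norm_num) hv0' hp
  have h2 : (2 : ℝ) = deriv p (1 / 2) := (hx1 ▸ hdem 1).hasDerivAt_eq (by norm_num) hv1' hp
  linarith
end

section
/- If (x, p) is a quasilinear Walrasian equilibrium, and each agent i is given budget B_i = p(x_i), then (x, B, p) is a Fisher market Walrasian equilibrium. -/
/-- `y` is in the Fisher market demand set for budget `B`. -/
def InFisherDemand {m : ℕ} (v p : (Fin m → ℝ) → ℝ) (B : ℝ) (y : Fin m → ℝ) : Prop :=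
  Nonneg y ∧ p y ≤ B ∧ ∀ z, Nonneg z → p z ≤ B → v z ≤ v y

/-- `(x, B, p)` is a Fisher market Walrasian equilibrium. -/
def IsFisherWE {n m : ℕ} (v : Fin n → (Fin m → ℝ) → ℝ) (B : Fin n → ℝ)
    (p : (Fin m → ℝ) → ℝ) (x : Fin n → Fin m → ℝ) : Prop :=
  (∀ i, InFisherDemand (v i) p (B i) (x i)) ∧ ValidAlloc x ∧
    ∀ j, NonzeroCost p j → ∑ i, x i j = 1

theorem InDemand.inFisherDemand_self {m : ℕ} {v p : (Fin m → ℝ) → ℝ} {y : Fin m → ℝ}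
    (h : InDemand v p y) : InFisherDemand v p (p y) y :=
  ⟨h.1, le_rfl, fun z hz hpz => by linarith [h.2 z hz]⟩

theorem stmt15 {n m : ℕ} (v : Fin n → (Fin m → ℝ) → ℝ)
    (p : (Fin m → ℝ) → ℝ) (x : Fin n → Fin m → ℝ)
    (hwe : IsWE v p x) :
    IsFisherWE v (fun i => p (x i)) p x :=
  let ⟨hdemand, hvalid, hclear⟩ := hwe
  ⟨fun i => (hdemand i).inFisherDemand_self, hvalid, hclear⟩
end

section
/- Assume each valuation v_i is concave and differentiable. Let x′ be a valid allocation with v_i(x′_i) > 0 for all i, set a_i = v_i(x′_i), and let ρ ∈ (0,1]. Then x′ ∈ Ψ(ρ) if and only if x′ ∈ Ψ_a(ρ−1), i.e., x′ maximizes unweighted CES welfare with exponent ρ if and only if it maximizes CES welfare with exponent ρ−1 weighted by the multipliers a_i (where for ρ = 1 the weighted objective Ψ_a(0) is weighted Nash welfare, i.e., the maximizers of ∑_i a_i log v_i(x_i)). -/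
/-- `x ∈ Ψ_a(ρ')` for ρ' < 0: a valid allocation with strictly positive
valuations maximizing the weighted CES welfare `(∑ a_i v_i(x_i)^{ρ'})^{1/ρ'}`
among all such allocations. -/
def MaxWCESneg {n m : ℕ} (v : Fin n → (Fin m → ℝ) → ℝ) (a : Fin n → ℝ) (ρ' : ℝ)
    (x : Fin n → Fin m → ℝ) : Prop :=
  ValidAlloc x ∧ (∀ i, 0 < v i (x i)) ∧
    ∀ y, ValidAlloc y → (∀ i, 0 < v i (y i)) →
      (∑ i, a i * v i (y i) ^ ρ') ^ (1 / ρ') ≤ (∑ i, a i * v i (x i) ^ ρ') ^ (1 / ρ')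

/-- `x ∈ Ψ_a(0)`: a valid allocation with strictly positive valuations
maximizing weighted Nash welfare `∑ a_i log v_i(x_i)` among all such
allocations. -/
def MaxWNash {n m : ℕ} (v : Fin n → (Fin m → ℝ) → ℝ) (a : Fin n → ℝ)
    (x : Fin n → Fin m → ℝ) : Prop :=
  ValidAlloc x ∧ (∀ i, 0 < v i (x i)) ∧
    ∀ y, ValidAlloc y → (∀ i, 0 < v i (y i)) →
      ∑ i, a i * Real.log (v i (y i)) ≤ ∑ i, a i * Real.log (v i (x i))

open Set

theorem HasDerivAt.nonpos_of_forall_Ioo_le {g : ℝ → ℝ} {d ε : ℝ} (hg : HasDerivAt g d 0)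
    (hε : 0 < ε) (hle : ∀ l ∈ Ioo 0 ε, g l ≤ g 0) : d ≤ 0 := by
  have hslope : Filter.Tendsto (slope g 0) (nhdsWithin 0 (Ioi 0)) (nhds d) :=
    (hasDerivWithinAt_iff_tendsto_slope' (by simp)).mp hg.hasDerivWithinAt
  refine le_of_tendsto hslope ?_
  filter_upwards [Ioo_mem_nhdsGT hε] with l hl
  rw [slope_def_field, sub_zero]
  exact div_nonpos_of_nonpos_of_nonneg (sub_nonpos.2 (hle l hl)) hl.1.le

theorem ConcaveOn.le_add_mul_sub_of_hasDerivAt {S : Set ℝ} {f : ℝ → ℝ} {x y d : ℝ}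
    (hf : ConcaveOn ℝ S f) (hx : x ∈ S) (hy : y ∈ S) (hd : HasDerivAt f d x) :
    f y ≤ f x + d * (y - x) := by
  rcases lt_trichotomy x y with hxy | rfl | hxy
  · have := hf.slope_le_of_hasDerivAt hx hy hxy hd
    rw [slope_def_field, div_le_iff₀ (sub_pos.2 hxy)] at this
    linarith
  · simp
  · have := hf.le_slope_of_hasDerivAt hy hx hxy hd
    rw [slope_def_field, le_div_iff₀ (sub_pos.2 hxy)] at this
    linarith

theorem Real.convexOn_rpow_of_nonpos {p : ℝ} (hp : p ≤ 0) :
    ConvexOn ℝ (Ioi 0) fun x : ℝ ↦ x ^ p := by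
  refine ⟨convex_Ioi 0, fun x hx y hy a b ha hb hab ↦ ?_⟩
  have hlog := strictConcaveOn_log_Ioi.concaveOn.2 hx hy ha hb hab
  have hexp := convexOn_exp.2 (mem_univ (Real.log x * p)) (mem_univ (Real.log y * p)) ha hb hab
  have hxy : 0 < a • x + b • y := convex_Ioi 0 hx hy ha hb hab
  simp only [smul_eq_mul] at hlog hexp hxy ⊢
  rw [Real.rpow_def_of_pos hx, Real.rpow_def_of_pos hy, Real.rpow_def_of_pos hxy]
  refine le_trans (Real.exp_le_exp.2 ?_) hexp
  nlinarith

theorem sum_le_sum_of_sum_mul_sub_nonpos {ι : Type*} [Fintype ι] {S : Set ℝ}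
    {φ : ι → ℝ → ℝ} {d s t : ι → ℝ} (hφ : ∀ i, ConcaveOn ℝ S (φ i))
    (hd : ∀ i, HasDerivAt (φ i) (d i) (s i)) (hs : ∀ i, s i ∈ S) (ht : ∀ i, t i ∈ S)
    (h : ∑ i, d i * (t i - s i) ≤ 0) : ∑ i, φ i (t i) ≤ ∑ i, φ i (s i) :=
  calc ∑ i, φ i (t i) ≤ ∑ i, (φ i (s i) + d i * (t i - s i)) :=
        Finset.sum_le_sum fun i _ ↦ (hφ i).le_add_mul_sub_of_hasDerivAt (hs i) (ht i) (hd i)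
    _ ≤ ∑ i, φ i (s i) := by rw [Finset.sum_add_distrib]; linarith

theorem sum_rpow_le_sum_rpow_iff_of_neg {ι : Type*} [Fintype ι] {f g : ι → ℝ}
    (hf : ∀ i, 0 < f i) (hg : ∀ i, 0 < g i) {r : ℝ} (hr : r < 0) :
    (∑ i, f i) ^ r ≤ (∑ i, g i) ^ r ↔ ∑ i, g i ≤ ∑ i, f i := by
  rcases isEmpty_or_nonempty ι with hι | hι
  · simp
  · exact Real.rpow_le_rpow_iff_of_neg (Finset.sum_pos (fun i _ ↦ hf i) Finset.univ_nonempty)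
      (Finset.sum_pos (fun i _ ↦ hg i) Finset.univ_nonempty) hr

theorem MonotoneVal.nonneg {m : ℕ} {v : (Fin m → ℝ) → ℝ} (hv : MonotoneVal v) (h0 : v 0 = 0)
    {y : Fin m → ℝ} (hy : Nonneg y) : 0 ≤ v y :=
  h0 ▸ hv 0 y (fun _ ↦ le_rfl) hy hy

theorem convex_validAlloc {n m : ℕ} : Convex ℝ {x : Fin n → Fin m → ℝ | ValidAlloc x} := by
  rintro x ⟨hx0, hx1⟩ y ⟨hy0, hy1⟩ a b ha hb hab
  refine ⟨fun i j ↦ ?_, fun j ↦ ?_⟩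
  · have := hx0 i j
    have := hy0 i j
    simp only [Pi.add_apply, Pi.smul_apply, smul_eq_mul]
    positivity
  · simp only [Pi.add_apply, Pi.smul_apply, smul_eq_mul, Finset.sum_add_distrib, ← Finset.mul_sum]
    nlinarith [hx1 j, hy1 j]

def CESFirstOrderCond {n m : ℕ} (v : Fin n → (Fin m → ℝ) → ℝ) (ρ : ℝ)
    (x : Fin n → Fin m → ℝ) : Prop :=
  ∀ y, ValidAlloc y → ∑ i, v i (x i) ^ (ρ - 1) * (v i (y i) - v i (x i)) ≤ 0

section FirstOrder

variable {n m : ℕ} {v : Fin n → (Fin m → ℝ) → ℝ} {x : Fin n → Fin m → ℝ}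

theorem sum_mul_sub_nonpos_of_forall_sum_le
    (hconc : ∀ i, ConcaveOn ℝ {y : Fin m → ℝ | Nonneg y} (v i)) (hx : ValidAlloc x)
    (hpos : ∀ i, 0 < v i (x i)) {φ : Fin n → ℝ → ℝ} {d : Fin n → ℝ}
    (hφ : ∀ i, MonotoneOn (φ i) (Ioi 0)) (hd : ∀ i, HasDerivAt (φ i) (d i) (v i (x i)))
    (hmax : ∀ z, ValidAlloc z → (∀ i, 0 < v i (z i)) →
      ∑ i, φ i (v i (z i)) ≤ ∑ i, φ i (v i (x i)))
    {y : Fin n → Fin m → ℝ} (hy : ValidAlloc y) (hvy : ∀ i, 0 ≤ v i (y i)) :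
    ∑ i, d i * (v i (y i) - v i (x i)) ≤ 0 := by
  set s := fun i ↦ v i (x i)
  set t := fun i ↦ v i (y i)
  have hg : HasDerivAt (fun l ↦ ∑ i, φ i (s i + l * (t i - s i)))
      (∑ i, d i * (t i - s i)) 0 := by
    refine HasDerivAt.fun_sum fun i _ ↦ ?_
    have hlin : HasDerivAt (fun l ↦ s i + l * (t i - s i)) (t i - s i) 0 :=
      (hasDerivAt_mul_const _).const_add _
    exact (hd i).comp_of_eq 0 hlin (by simp [s])
  refine hg.nonpos_of_forall_Ioo_le one_pos fun l hl ↦ ?_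
  have hl1 : 0 ≤ 1 - l := by linarith [hl.2]
  have hz : ValidAlloc ((1 - l) • x + l • y) := convex_validAlloc hx hy hl1 hl.1.le (by ring)
  have hconcave : ∀ i, s i + l * (t i - s i) ≤ v i (((1 - l) • x + l • y) i) := fun i ↦ by
    have := (hconc i).2 (hx.1 i) (hy.1 i) hl1 hl.1.le (by ring)
    simp only [smul_eq_mul] at this
    exact le_of_eq_of_le (by ring) this
  have hpos_l : ∀ i, 0 < s i + l * (t i - s i) := fun i ↦ by
    nlinarith [hpos i, hvy i, hl.1, hl.2]
  calc ∑ i, φ i (s i + l * (t i - s i)) ≤ ∑ i, φ i (v i (((1 - l) • x + l • y) i)) :=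
        Finset.sum_le_sum fun i _ ↦ hφ i (hpos_l i) ((hpos_l i).trans_le (hconcave i)) (hconcave i)
    _ ≤ ∑ i, φ i (s i) := hmax _ hz fun i ↦ (hpos_l i).trans_le (hconcave i)
    _ = ∑ i, φ i (s i + 0 * (t i - s i)) := by simp

theorem forall_sum_le_iff_cesFirstOrderCond {ρ c : ℝ} {S : Set ℝ} (hS : Ioi 0 ⊆ S)
    (hmono : ∀ i, MonotoneVal (v i)) (hnorm : ∀ i, v i 0 = 0)
    (hconc : ∀ i, ConcaveOn ℝ {y : Fin m → ℝ | Nonneg y} (v i)) (hx : ValidAlloc x)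
    (hpos : ∀ i, 0 < v i (x i)) {φ : Fin n → ℝ → ℝ} (hc : 0 < c)
    (hφc : ∀ i, ConcaveOn ℝ S (φ i)) (hφm : ∀ i, MonotoneOn (φ i) (Ioi 0))
    (hd : ∀ i, HasDerivAt (φ i) (c * v i (x i) ^ (ρ - 1)) (v i (x i))) :
    (∀ y, ValidAlloc y → (∀ i, v i (y i) ∈ S) →
      ∑ i, φ i (v i (y i)) ≤ ∑ i, φ i (v i (x i))) ↔ CESFirstOrderCond v ρ x := by
  constructor
  · intro hmax y hy
    have := sum_mul_sub_nonpos_of_forall_sum_le hconc hx hpos hφm hd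
      (fun z hz hzpos ↦ hmax z hz fun i ↦ hS (hzpos i)) hy
      fun i ↦ (hmono i).nonneg (hnorm i) (hy.1 i)
    simp only [mul_assoc, ← Finset.mul_sum] at this
    exact nonpos_of_mul_nonpos_right this hc
  · intro hfoc y hy hyS
    refine sum_le_sum_of_sum_mul_sub_nonpos hφc hd (fun i ↦ hS (hpos i)) hyS ?_
    simp only [mul_assoc, ← Finset.mul_sum]
    exact mul_nonpos_of_nonneg_of_nonpos hc.le (hfoc y hy)

end FirstOrder

section Objectives

variable {n m : ℕ} {v : Fin n → (Fin m → ℝ) → ℝ} {x : Fin n → Fin m → ℝ}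

theorem maxCES_iff_cesFirstOrderCond {ρ : ℝ} (hρ0 : 0 < ρ) (hρ1 : ρ ≤ 1)
    (hmono : ∀ i, MonotoneVal (v i)) (hnorm : ∀ i, v i 0 = 0)
    (hconc : ∀ i, ConcaveOn ℝ {y : Fin m → ℝ | Nonneg y} (v i)) (hx : ValidAlloc x)
    (hpos : ∀ i, 0 < v i (x i)) :
    MaxCES v ρ x ↔ CESFirstOrderCond v ρ x := by
  have hval : ∀ y, ValidAlloc y → ∀ i, 0 ≤ v i (y i) :=
    fun y hy i ↦ (hmono i).nonneg (hnorm i) (hy.1 i)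
  have hsum : ∀ y, ValidAlloc y → 0 ≤ ∑ i, v i (y i) ^ ρ :=
    fun y hy ↦ Finset.sum_nonneg fun i _ ↦ Real.rpow_nonneg (hval y hy i) ρ
  have hmax : MaxCES v ρ x ↔ ∀ y, ValidAlloc y → (∀ i, v i (y i) ∈ Ici 0) →
      ∑ i, v i (y i) ^ ρ ≤ ∑ i, v i (x i) ^ ρ := by
    simp only [MaxCES, CES, hx, true_and]
    refine forall₂_congr fun y hy ↦ ?_
    rw [Real.rpow_le_rpow_iff (hsum y hy) (hsum x hx) (by positivity)]
    exact ⟨fun h _ ↦ h, fun h ↦ h (hval y hy)⟩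
  rw [hmax]
  exact forall_sum_le_iff_cesFirstOrderCond (φ := fun _ u ↦ u ^ ρ) Ioi_subset_Ici_self
    hmono hnorm hconc hx hpos hρ0 (fun _ ↦ Real.concaveOn_rpow hρ0.le hρ1)
    (fun _ ↦ (Real.monotoneOn_rpow_Ici_of_exponent_nonneg hρ0.le).mono Ioi_subset_Ici_self)
    fun i ↦ Real.hasDerivAt_rpow_const (Or.inl (hpos i).ne')

theorem maxWCESneg_iff_cesFirstOrderCond {ρ : ℝ} (hρ1 : ρ < 1)
    (hmono : ∀ i, MonotoneVal (v i)) (hnorm : ∀ i, v i 0 = 0)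
    (hconc : ∀ i, ConcaveOn ℝ {y : Fin m → ℝ | Nonneg y} (v i)) (hx : ValidAlloc x)
    (hpos : ∀ i, 0 < v i (x i)) :
    MaxWCESneg v (fun i ↦ v i (x i)) (ρ - 1) x ↔ CESFirstOrderCond v ρ x := by
  have hp : ρ - 1 < 0 := by linarith
  have hmax : MaxWCESneg v (fun i ↦ v i (x i)) (ρ - 1) x ↔
      ∀ y, ValidAlloc y → (∀ i, v i (y i) ∈ Ioi 0) →
        ∑ i, -(v i (x i) * v i (y i) ^ (ρ - 1)) ≤ ∑ i, -(v i (x i) * v i (x i) ^ (ρ - 1)) := by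
    simp only [MaxWCESneg, hx, hpos, implies_true, true_and, Finset.sum_neg_distrib,
      neg_le_neg_iff]
    refine forall₃_congr fun y hy hypos ↦ sum_rpow_le_sum_rpow_iff_of_neg
      (fun i ↦ mul_pos (hpos i) (Real.rpow_pos_of_pos (hypos i) _))
      (fun i ↦ mul_pos (hpos i) (Real.rpow_pos_of_pos (hpos i) _)) (one_div_neg.2 hp)
  rw [hmax]
  refine forall_sum_le_iff_cesFirstOrderCond subset_rfl hmono hnorm hconc hx hpos
    (sub_pos.2 hρ1) (fun i ↦ ((Real.convexOn_rpow_of_nonpos hp.le).smul (hpos i).le).neg)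
    (fun i a ha b _ hab ↦ neg_le_neg (mul_le_mul_of_nonneg_left
      (Real.antitoneOn_rpow_Ioi_of_exponent_nonpos hp.le ha (ha.trans_le hab) hab) (hpos i).le))
    fun i ↦ ?_
  refine ((Real.hasDerivAt_rpow_const (p := ρ - 1) (Or.inl (hpos i).ne')).const_mul
    (v i (x i))).neg.congr_deriv ?_
  have hs : v i (x i) * v i (x i) ^ (ρ - 1 - 1) = v i (x i) ^ (ρ - 1) := by
    rw [Real.rpow_sub_one (hpos i).ne', mul_div_cancel₀ _ (hpos i).ne']
  linear_combination (1 - ρ) * hs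

theorem maxWNash_iff_cesFirstOrderCond
    (hmono : ∀ i, MonotoneVal (v i)) (hnorm : ∀ i, v i 0 = 0)
    (hconc : ∀ i, ConcaveOn ℝ {y : Fin m → ℝ | Nonneg y} (v i)) (hx : ValidAlloc x)
    (hpos : ∀ i, 0 < v i (x i)) :
    MaxWNash v (fun i ↦ v i (x i)) x ↔ CESFirstOrderCond v 1 x := by
  simp only [MaxWNash, hx, hpos, implies_true, true_and]
  refine forall_sum_le_iff_cesFirstOrderCond (φ := fun i u ↦ v i (x i) * Real.log u) subset_rfl
    hmono hnorm hconc hx hpos one_pos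
    (fun i ↦ strictConcaveOn_log_Ioi.concaveOn.smul (hpos i).le)
    (fun i a ha _ _ hab ↦ mul_le_mul_of_nonneg_left (Real.log_le_log ha hab) (hpos i).le)
    fun i ↦ ((Real.hasDerivAt_log (hpos i).ne').const_mul (v i (x i))).congr_deriv ?_
  simp [(hpos i).ne']

end Objectives

theorem stmt16_general {n m : ℕ} (v : Fin n → (Fin m → ℝ) → ℝ) (ρ : ℝ)
    (hρ0 : 0 < ρ) (hρ1 : ρ ≤ 1)
    (hmono : ∀ i, MonotoneVal (v i))
    (hnorm : ∀ i, v i 0 = 0)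
    (hconc : ∀ i, ConcaveOn ℝ {y : Fin m → ℝ | Nonneg y} (v i))
    (x' : Fin n → Fin m → ℝ) (hx' : ValidAlloc x')
    (hpos : ∀ i, 0 < v i (x' i))
    (a : Fin n → ℝ) (ha : ∀ i, a i = v i (x' i)) :
    (ρ ≠ 1 → (MaxCES v ρ x' ↔ MaxWCESneg v a (ρ - 1) x')) ∧
    (ρ = 1 → (MaxCES v ρ x' ↔ MaxWNash v a x')) := by
  obtain rfl : a = fun i ↦ v i (x' i) := funext ha
  have hCES := maxCES_iff_cesFirstOrderCond hρ0 hρ1 hmono hnorm hconc hx' hpos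
  refine ⟨fun hρ ↦ hCES.trans (maxWCESneg_iff_cesFirstOrderCond (hρ1.lt_of_ne hρ)
    hmono hnorm hconc hx' hpos).symm, ?_⟩
  rintro rfl
  exact hCES.trans (maxWNash_iff_cesFirstOrderCond hmono hnorm hconc hx' hpos).symm

theorem stmt16 {n m : ℕ} (v : Fin n → (Fin m → ℝ) → ℝ) (ρ : ℝ)
    (hρ0 : 0 < ρ) (hρ1 : ρ ≤ 1)
    (hnz : ∀ i, NonzeroVal (v i)) (hmono : ∀ i, MonotoneVal (v i))
    (hnorm : ∀ i, v i 0 = 0)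
    (hconc : ∀ i, ConcaveOn ℝ {y : Fin m → ℝ | Nonneg y} (v i))
    (hdiff : ∀ i, DiffVal (v i))
    (x' : Fin n → Fin m → ℝ) (hx' : ValidAlloc x')
    (hpos : ∀ i, 0 < v i (x' i))
    (a : Fin n → ℝ) (ha : ∀ i, a i = v i (x' i)) :
    (ρ ≠ 1 → (MaxCES v ρ x' ↔ MaxWCESneg v a (ρ - 1) x')) ∧
    (ρ = 1 → (MaxCES v ρ x' ↔ MaxWNash v a x')) :=
  stmt16_general v ρ hρ0 hρ1 hmono hnorm hconc x' hx' hpos a ha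
end

section
/- Assume each valuation is Leontief: v_i(x_i) = min_{j : w_{ij} ≠ 0} x_{ij}/w_{ij} for weights w_{i1},…,w_{im} ∈ ℝ_{≥0} (not all zero). Then for any ρ ∈ (0,1] and any valid allocation x, we have x ∈ Ψ(ρ) if and only if there exist constants q_1,…,q_m ∈ ℝ_{≥0} such that, for the pricing rule p(y) = ρ·(∑_j q_j y_j)^{1/ρ}, the pair (x, p) is a Walrasian equilibrium. -/
/-! In utility space the problem is to maximise `∑ uᵢ ^ ρ` over the polytope
`{u ≥ 0, u ᵥ* w ≤ 1}`: a Leontief agent with utility `uᵢ` needs exactly the bundle `uᵢ • wᵢ`.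
Since the utility `0` is strictly feasible, Slater's theorem (separate the attainable pairs
(constraint values, objective value) from an open orthant) gives prices `q ≥ 0` such that `u`
maximises the Lagrangian `∑ᵢ (uᵢ ^ ρ - ρ cᵢ uᵢ)`, `cᵢ = q ⬝ᵥ wᵢ`, over all `u ≥ 0`, with
complementary slackness, which is market clearing. The Lagrangian is separable, and `uᵢ`
maximises `t ^ ρ - ρ cᵢ t` iff it maximises `s - ρ (cᵢ s) ^ (1 / ρ)`, agent `i`'s demand problem
along the ray through `wᵢ` under the price `ρ (q ⬝ᵥ y) ^ (1 / ρ)`: for `ρ < 1` both functions are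
strictly concave and both conditions say `cᵢ = uᵢ ^ (ρ - 1)`. Conversely, at an equilibrium the
same conditions make `u` maximise the Lagrangian, and then weak duality bounds the welfare of every
valid allocation. -/

open Finset Set Matrix

section Lagrange
variable {V ι : Type*} [AddCommGroup V] [Module ℝ V] {S : Set V} {F : V → ℝ}
  {g : ι → V → ℝ} {x : V}

lemma LinearMap.apply_nonpos_of_forall_add_smul_lt {E : Type*} [AddCommGroup E] [Module ℝ E]
    (f : E →ₗ[ℝ] ℝ) {b d : E} {c : ℝ} (h : ∀ t : ℝ, 0 ≤ t → f (b + t • d) < c) : f d ≤ 0 := by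
  by_contra! hd
  have hb : f b < c := by simpa using h 0 le_rfl
  have := h ((c - f b) / f d) (div_nonneg (sub_nonneg.2 hb.le) hd.le)
  rw [map_add, map_smul, smul_eq_mul, div_mul_cancel₀ _ hd.ne'] at this
  linarith

lemma ContinuousLinearMap.apply_prod_eq_sum [Fintype ι] [DecidableEq ι] (f : (ι → ℝ) × ℝ →L[ℝ] ℝ)
    (s : ι → ℝ) (r : ℝ) : f (s, r) = ∑ j, s j * f (Pi.single j 1, 0) + r * f (0, 1) := by
  have : (s, r) = ∑ j, s j • ((Pi.single j 1 : ι → ℝ), (0 : ℝ)) + r • ((0 : ι → ℝ), (1 : ℝ)) := by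
    ext j <;> simp [Prod.fst_sum, Prod.snd_sum, Finset.sum_apply, Pi.single_apply]
  rw [this]
  simp only [map_add, map_sum, map_smul, smul_eq_mul]

lemma ConcaveOn.convex_setOf_exists_le (hF : ConcaveOn ℝ S F) (hg : ∀ j, ConvexOn ℝ S (g j)) :
    Convex ℝ {p : (ι → ℝ) × ℝ | ∃ y ∈ S, (∀ j, g j y ≤ p.1 j) ∧ p.2 ≤ F y} := by
  rintro _ ⟨y, hy, hgy, hFy⟩ _ ⟨z, hz, hgz, hFz⟩ a b ha hb hab
  refine ⟨a • y + b • z, hF.1 hy hz ha hb hab, fun j => ?_, ?_⟩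
  · calc g j (a • y + b • z) ≤ a • g j y + b • g j z := (hg j).2 hy hz ha hb hab
      _ ≤ _ := by dsimp; gcongr <;> simp_all
  · calc _ ≤ a • F y + b • F z := by dsimp; gcongr
      _ ≤ F (a • y + b • z) := hF.2 hy hz ha hb hab

lemma ContinuousLinearMap.le_of_forall_lt_on_pi_Iio_prod_Ioi [Fintype ι] [DecidableEq ι]
    (f : (ι → ℝ) × ℝ →L[ℝ] ℝ) {a c : ℝ}
    (hf : ∀ p ∈ (Set.univ.pi fun _ => Iio 0) ×ˢ Ioi a, f p < c) :
    (∀ j, 0 ≤ f (Pi.single j 1, 0)) ∧ f (0, 1) ≤ 0 ∧ f (0, a) ≤ c := by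
  have hb : ∀ t : ℝ, 0 ≤ t → ∀ d : (ι → ℝ) × ℝ, d.1 ≤ 0 → 0 ≤ d.2 →
      f ((fun _ => -1, a + 1) + t • d) < c := by
    intro t ht d hd1 hd2
    refine hf _ ⟨fun j _ => ?_, ?_⟩
    · have := mul_nonpos_of_nonneg_of_nonpos ht (hd1 j); simp; linarith
    · have := mul_nonneg ht hd2; simp; linarith
  refine ⟨fun j => ?_, f.toLinearMap.apply_nonpos_of_forall_add_smul_lt
    fun t ht => hb t ht _ le_rfl zero_le_one, ?_⟩
  · have := f.toLinearMap.apply_nonpos_of_forall_add_smul_lt (d := -(Pi.single j 1, 0))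
      fun t ht => hb t ht _ (by simp [Pi.single_nonneg]) (by simp)
    rwa [map_neg, neg_nonpos] at this
  · have hclos : (0, a) ∈ closure ((Set.univ.pi fun _ : ι => Iio (0 : ℝ)) ×ˢ Ioi a) := by
      rw [closure_prod_eq, closure_pi_set, closure_Iio, closure_Ioi]
      exact ⟨fun _ _ => Set.mem_Iic.2 le_rfl, Set.mem_Ici.2 le_rfl⟩
    exact closure_minimal (fun p hp => (hf p hp).le)
      (isClosed_le f.continuous continuous_const) hclos

theorem ConcaveOn.exists_fritzJohn [Fintype ι] (hF : ConcaveOn ℝ S F)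
    (hg : ∀ j, ConvexOn ℝ S (g j)) (hx : x ∈ S)
    (hmax : ∀ y ∈ S, (∀ j, g j y ≤ 0) → F y ≤ F x) :
    ∃ (ℓ : ι → ℝ) (κ : ℝ), 0 ≤ ℓ ∧ 0 ≤ κ ∧ (ℓ ≠ 0 ∨ κ ≠ 0) ∧
      ∀ y ∈ S, κ * F y - ∑ j, ℓ j * g j y ≤ κ * F x := by
  classical
  set B : Set ((ι → ℝ) × ℝ) := (Set.univ.pi fun _ => Iio 0) ×ˢ Ioi (F x)
  have hB : Convex ℝ B := (convex_pi fun _ _ => convex_Iio 0).prod (convex_Ioi _)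
  have hBo : IsOpen B := (isOpen_set_pi finite_univ fun _ _ => isOpen_Iio).prod isOpen_Ioi
  have hAB : Disjoint B {p | ∃ y ∈ S, (∀ j, g j y ≤ p.1 j) ∧ p.2 ≤ F y} := by
    rw [Set.disjoint_left]
    rintro ⟨s, r⟩ ⟨hs, hr⟩ ⟨y, hy, hgy, hFy⟩
    simp only [mem_univ_pi, Set.mem_Iio, Set.mem_Ioi] at hs hr
    exact (hmax y hy fun j => (hgy j).trans (hs j).le).not_gt (hr.trans_le hFy)
  obtain ⟨f, c, hfB, hfA⟩ :=
    geometric_hahn_banach_open hB hBo (hF.convex_setOf_exists_le hg) hAB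
  obtain ⟨hℓ, hκ, hfx⟩ := f.le_of_forall_lt_on_pi_Iio_prod_Ioi hfB
  have hfA' : ∀ y ∈ S, c ≤ ∑ j, g j y * f (Pi.single j 1, 0) + F y * f (0, 1) := fun y hy => by
    rw [← f.apply_prod_eq_sum]; exact hfA _ ⟨y, hy, fun _ => le_rfl, le_rfl⟩
  refine ⟨fun j => f (Pi.single j 1, 0), -f (0, 1), hℓ, neg_nonneg.2 hκ, ?_, fun y hy => ?_⟩
  · by_contra! h
    have h1 := hfB (fun _ => -1, F x + 1)
      ⟨fun _ _ => Set.mem_Iio.2 neg_one_lt_zero, Set.mem_Ioi.2 (lt_add_one _)⟩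
    have h2 := hfA' x hx
    rw [f.apply_prod_eq_sum, neg_eq_zero.1 h.2] at h1
    simp only [neg_eq_zero.1 h.2, funext_iff.1 h.1, Pi.zero_apply, mul_zero, Finset.sum_const_zero,
      add_zero] at h1 h2
    linarith
  · have := hfA' y hy
    rw [f.apply_prod_eq_sum] at hfx
    simp only [Pi.zero_apply, zero_mul, Finset.sum_const_zero, zero_add] at hfx
    simp only [mul_comm (f _)]
    linarith

theorem ConcaveOn.exists_isMaxOn_lagrangian [Fintype ι] (hF : ConcaveOn ℝ S F)
    (hg : ∀ j, ConvexOn ℝ S (g j)) {y₀ : V} (hy₀ : y₀ ∈ S) (hslater : ∀ j, g j y₀ < 0)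
    (hx : x ∈ S) (hgx : ∀ j, g j x ≤ 0) (hmax : ∀ y ∈ S, (∀ j, g j y ≤ 0) → F y ≤ F x) :
    ∃ μ : ι → ℝ, 0 ≤ μ ∧ (∀ j, μ j * g j x = 0) ∧
      IsMaxOn (fun y => F y - ∑ j, μ j * g j y) S x := by
  obtain ⟨ℓ, κ, hℓ, hκ, hne, hL⟩ := hF.exists_fritzJohn hg hx hmax
  have hκ0 : 0 < κ := by
    refine hκ.lt_of_ne fun hκ0 => hne.resolve_right (not_not.2 hκ0.symm) (funext fun j => ?_)
    have hle : ∀ j ∈ Finset.univ, ℓ j * g j y₀ ≤ 0 := fun j _ =>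
      mul_nonpos_of_nonneg_of_nonpos (hℓ j) (hslater j).le
    have := hL y₀ hy₀
    rw [← hκ0, zero_mul, zero_mul, zero_sub, neg_nonpos] at this
    have := (Finset.sum_eq_zero_iff_of_nonpos hle).1 (le_antisymm (Finset.sum_nonpos hle) this) j
      (Finset.mem_univ j)
    exact (mul_eq_zero.1 this).resolve_right (hslater j).ne
  have hcs : ∀ j, ℓ j * g j x = 0 := by
    have hle : ∀ j ∈ Finset.univ, ℓ j * g j x ≤ 0 := fun j _ =>
      mul_nonpos_of_nonneg_of_nonpos (hℓ j) (hgx j)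
    have := hL x hx
    exact fun j => (Finset.sum_eq_zero_iff_of_nonpos hle).1
      (by linarith [Finset.sum_nonpos hle]) j (Finset.mem_univ j)
  refine ⟨κ⁻¹ • ℓ, smul_nonneg (inv_nonneg.2 hκ) hℓ, fun j => ?_, fun y hy => ?_⟩
  · rw [Pi.smul_apply, smul_eq_mul, mul_assoc, hcs, mul_zero]
  · simp only [Pi.smul_apply, smul_eq_mul, mul_assoc, hcs, mul_zero, Finset.sum_const_zero,
      sub_zero, ← Finset.mul_sum, mem_ofPred_eq]
    rw [sub_le_iff_le_add', ← sub_le_iff_le_add, ← div_eq_inv_mul, le_div_iff₀ hκ0]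
    linarith [hL y hy]

end Lagrange

lemma IsMaxOn.apply_of_sum {ι α : Type*} [Fintype ι] [DecidableEq ι] {T : ι → Set α}
    {φ : ι → α → ℝ} {x : ι → α} (h : IsMaxOn (fun y => ∑ i, φ i (y i)) (univ.pi T) x)
    (hx : x ∈ univ.pi T) (i : ι) : IsMaxOn (φ i) (T i) (x i) := by
  intro t ht
  have := h ((update_mem_pi_iff_of_mem hx).2 fun _ => ht)
  simp only [mem_ofPred_eq] at this ⊢
  rw [← Finset.add_sum_erase _ _ (Finset.mem_univ i),
    ← Finset.add_sum_erase _ _ (Finset.mem_univ i),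
    Function.update_self, Finset.sum_congr rfl fun k hk => by
      rw [Function.update_of_ne (Finset.ne_of_mem_erase hk)]] at this
  linarith

lemma sum_le_sum_of_isMaxOn_sub_mul {ι : Type*} [Fintype ι] {T : Set ℝ} {f : ι → ℝ → ℝ}
    {c u s : ι → ℝ} (hmax : ∀ i, IsMaxOn (fun t => f i t - c i * t) T (u i))
    (hs : ∀ i, s i ∈ T) (hcs : ∑ i, c i * s i ≤ ∑ i, c i * u i) :
    ∑ i, f i (s i) ≤ ∑ i, f i (u i) := by
  have h : ∀ i ∈ Finset.univ, f i (s i) - c i * s i ≤ f i (u i) - c i * u i :=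
    fun i _ => hmax i (hs i)
  have := Finset.sum_le_sum h
  simp only [Finset.sum_sub_distrib] at this
  linarith

section OneDim
variable {ρ c u : ℝ}

lemma isMaxOn_rpow_sub_mul_rpow (hρ0 : 0 < ρ) (hρ1 : ρ ≤ 1) (hu : 0 < u) :
    IsMaxOn (fun t : ℝ => t ^ ρ - ρ * u ^ (ρ - 1) * t) (Ici 0) u := by
  intro t (ht : 0 ≤ t)
  have amgm := Real.geom_mean_le_arith_mean2_weighted hρ0.le (sub_nonneg.2 hρ1)
    (mul_nonneg ht (Real.rpow_nonneg hu.le (ρ - 1))) (Real.rpow_nonneg hu.le ρ) (by ring)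
  rw [Real.mul_rpow ht (Real.rpow_nonneg hu.le _), mul_assoc, ← Real.rpow_mul hu.le,
    ← Real.rpow_mul hu.le, ← Real.rpow_add hu, show (ρ - 1) * ρ + ρ * (1 - ρ) = 0 by ring,
    Real.rpow_zero, mul_one] at amgm
  have : u ^ (ρ - 1) * u = u ^ ρ := by rw [Real.rpow_sub_one hu.ne', div_mul_cancel₀ _ hu.ne']
  show t ^ ρ - ρ * u ^ (ρ - 1) * t ≤ u ^ ρ - ρ * u ^ (ρ - 1) * u
  rw [mul_assoc ρ _ u, this]
  linarith

lemma isMaxOn_rpow_sub_mul_iff (hρ0 : 0 < ρ) (hρ1 : ρ < 1) (hu : 0 ≤ u) :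
    IsMaxOn (fun t : ℝ => t ^ ρ - ρ * c * t) (Ici 0) u ↔ 0 < u ∧ c = u ^ (ρ - 1) := by
  refine ⟨fun h => ?_, fun ⟨hu, hc⟩ => hc ▸ isMaxOn_rpow_sub_mul_rpow hρ0 hρ1.le hu⟩
  have hc : 0 < c := by
    by_contra! hc
    have h1 : ρ * c * (u + 1) ≤ ρ * c * u := by nlinarith
    have h2 : u ^ ρ < (u + 1) ^ ρ := Real.rpow_lt_rpow hu (lt_add_one u) hρ0
    have h3 : (u + 1) ^ ρ - ρ * c * (u + 1) ≤ u ^ ρ - ρ * c * u := h (by simp; linarith)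
    linarith
  set u' := c ^ (ρ - 1)⁻¹
  have hu' : 0 < u' := Real.rpow_pos_of_pos hc _
  have hcu' : c = u' ^ (ρ - 1) := by
    rw [← Real.rpow_mul hc.le, inv_mul_cancel₀ (by linarith), Real.rpow_one]
  have hconc : StrictConcaveOn ℝ (Ici 0) fun t : ℝ => t ^ ρ - ρ * c * t :=
    (Real.strictConcaveOn_rpow hρ0 hρ1).sub_convexOn
      ((LinearMap.lsmul ℝ ℝ (ρ * c)).convexOn (convex_Ici 0))
  have := hconc.eq_of_isMaxOn h (hcu' ▸ isMaxOn_rpow_sub_mul_rpow hρ0 hρ1.le hu') hu hu'.le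
  exact ⟨this ▸ hu', this ▸ hcu'⟩

lemma isMaxOn_sub_mul_rpow_iff_rpow (hρ0 : 0 < ρ) (hc : 0 ≤ c) (hu : 0 ≤ u) :
    IsMaxOn (fun s : ℝ => s - ρ * (c * s) ^ (1 / ρ)) (Ici 0) u ↔
      IsMaxOn (fun t : ℝ => t ^ ρ - ρ * c ^ (1 / ρ) * t) (Ici 0) (u ^ (1 / ρ)) := by
  have key : ∀ t : ℝ, 0 ≤ t → t ^ ρ - ρ * (c * t ^ ρ) ^ (1 / ρ) = t ^ ρ - ρ * c ^ (1 / ρ) * t :=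
    fun t ht => by
      rw [Real.mul_rpow hc (Real.rpow_nonneg ht _), ← Real.rpow_mul ht, mul_one_div_cancel hρ0.ne',
        Real.rpow_one, mul_assoc]
  have hinv : ∀ s : ℝ, 0 ≤ s → (s ^ (1 / ρ)) ^ ρ = s := fun s hs => by
    rw [← Real.rpow_mul hs, one_div_mul_cancel hρ0.ne', Real.rpow_one]
  constructor
  · intro h t (ht : 0 ≤ t)
    have := h (Real.rpow_nonneg ht ρ)
    simp only [mem_ofPred_eq] at this ⊢
    rwa [key t ht, ← hinv u hu, key _ (Real.rpow_nonneg hu _)] at this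
  · intro h s (hs : 0 ≤ s)
    have := h (Real.rpow_nonneg hs (1 / ρ))
    simp only [mem_ofPred_eq] at this ⊢
    rwa [← key _ (Real.rpow_nonneg hs _), ← key _ (Real.rpow_nonneg hu _), hinv s hs,
      hinv u hu] at this

lemma isMaxOn_sub_mul_rpow_iff (hρ0 : 0 < ρ) (hρ1 : ρ ≤ 1) (hc : 0 ≤ c) (hu : 0 ≤ u) :
    IsMaxOn (fun s : ℝ => s - ρ * (c * s) ^ (1 / ρ)) (Ici 0) u ↔
      IsMaxOn (fun t : ℝ => t ^ ρ - ρ * c * t) (Ici 0) u := by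
  obtain hρ1 | rfl := hρ1.lt_or_eq
  · have hpos : 0 < u ^ (1 / ρ) ↔ 0 < u := by
      simp only [lt_iff_le_and_ne, hu, Real.rpow_nonneg hu, true_and, ne_comm (a := (0 : ℝ)),
        ne_eq, Real.rpow_eq_zero hu (one_div_pos.2 hρ0).ne']
    rw [isMaxOn_sub_mul_rpow_iff_rpow hρ0 hc hu,
      isMaxOn_rpow_sub_mul_iff hρ0 hρ1 (Real.rpow_nonneg hu _),
      isMaxOn_rpow_sub_mul_iff hρ0 hρ1 hu, hpos, ← Real.rpow_mul hu,
      mul_comm, Real.rpow_mul hu, Real.rpow_left_inj hc (Real.rpow_nonneg hu _) (by positivity)]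
  · simp

end OneDim

def IsLeontief {m : ℕ} (w : Fin m → ℝ) (v : (Fin m → ℝ) → ℝ) : Prop :=
  ∀ y, Nonneg y → IsLeast {t : ℝ | ∃ j, w j ≠ 0 ∧ t = y j / w j} (v y)

namespace IsLeontief
variable {m : ℕ} {w y : Fin m → ℝ} {v : (Fin m → ℝ) → ℝ}

lemma nonneg (hv : IsLeontief w v) (hw : 0 ≤ w) (hy : Nonneg y) : 0 ≤ v y := by
  obtain ⟨⟨j, -, hj⟩, -⟩ := hv y hy
  exact hj ▸ div_nonneg (hy j) (hw j)

lemma mul_le (hv : IsLeontief w v) (hw : 0 ≤ w) (hy : Nonneg y) (j : Fin m) :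
    v y * w j ≤ y j := by
  obtain hj | hj := (show 0 ≤ w j from hw j).eq_or_lt
  · rw [← hj, mul_zero]; exact hy j
  · exact (le_div_iff₀ hj).1 ((hv y hy).2 ⟨j, hj.ne', rfl⟩)

lemma apply_smul (hv : IsLeontief w v) (hw : 0 ≤ w) (hnz : ∃ j, w j ≠ 0) {c : ℝ}
    (hc : 0 ≤ c) : v (c • w) = c := by
  obtain ⟨j, hj⟩ := hnz
  refine (hv _ fun k => mul_nonneg hc (hw k)).unique ⟨⟨j, hj, ?_⟩, ?_⟩
  · simp [hj]
  · rintro _ ⟨k, hk, rfl⟩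
    simp [hk]

lemma mul_dotProduct_le (hv : IsLeontief w v) (hw : 0 ≤ w) (hy : Nonneg y)
    {q : Fin m → ℝ} (hq : 0 ≤ q) : v y * (q ⬝ᵥ w) ≤ q ⬝ᵥ y := by
  rw [dotProduct, dotProduct, Finset.mul_sum]
  exact Finset.sum_le_sum fun j _ => by
    rw [mul_left_comm]; exact mul_le_mul_of_nonneg_left (hv.mul_le hw hy j) (hq j)

end IsLeontief

noncomputable def powerPrice {m : ℕ} (ρ : ℝ) (q y : Fin m → ℝ) : ℝ :=
  ρ * (q ⬝ᵥ y) ^ (1 / ρ)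

section Pricing
variable {m : ℕ} {ρ : ℝ} {q w y : Fin m → ℝ} {v : (Fin m → ℝ) → ℝ}

lemma nonzeroCost_powerPrice_iff (hρ : 0 < ρ) (hq : 0 ≤ q) (j : Fin m) :
    NonzeroCost (powerPrice ρ q) j ↔ 0 < q j := by
  constructor
  · rintro ⟨y, hy, hsupp, hpos⟩
    have : q ⬝ᵥ y = q j * y j :=
      Finset.sum_eq_single j (fun l _ hl => by rw [hsupp l hl, mul_zero]) (by simp)
    refine (hq j).lt_of_ne fun hqj => ?_
    simp [powerPrice, this, ← hqj, hρ.ne'] at hpos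
  · intro hqj
    refine ⟨Pi.single j 1, fun l => ?_, fun l hl => Pi.single_eq_of_ne hl _, ?_⟩
    · by_cases hl : l = j <;> simp [hl]
    · simpa [powerPrice, dotProduct_single] using mul_pos hρ (Real.rpow_pos_of_pos hqj _)

lemma InDemand.sub_mul_rpow_le (hv : IsLeontief w v) (hw : 0 ≤ w) (hnz : ∃ j, w j ≠ 0)
    (hd : InDemand v (powerPrice ρ q) y) {s : ℝ} (hs : 0 ≤ s) :
    s - ρ * ((q ⬝ᵥ w) * s) ^ (1 / ρ) ≤ v y - powerPrice ρ q y := by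
  have := hd.2 (s • w) fun j => mul_nonneg hs (hw j)
  rwa [hv.apply_smul hw hnz hs, powerPrice, dotProduct_smul, smul_eq_mul, mul_comm s] at this

lemma InDemand.isMaxOn_sub_mul_rpow (hv : IsLeontief w v) (hw : 0 ≤ w) (hnz : ∃ j, w j ≠ 0)
    (hρ : 0 < ρ) (hq : 0 ≤ q) (hd : InDemand v (powerPrice ρ q) y) :
    IsMaxOn (fun s => s - ρ * ((q ⬝ᵥ w) * s) ^ (1 / ρ)) (Ici 0) (v y) := by
  intro s (hs : 0 ≤ s)
  refine (hd.sub_mul_rpow_le hv hw hnz hs).trans ?_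
  have hcost := hv.mul_dotProduct_le hw hd.1 hq
  have h0 : 0 ≤ (q ⬝ᵥ w) * v y :=
    mul_nonneg (dotProduct_nonneg_of_nonneg hq hw) (hv.nonneg hw hd.1)
  simp only [powerPrice, sub_le_sub_iff_left]
  gcongr
  linarith

lemma InDemand.dotProduct_le_mul (hv : IsLeontief w v) (hw : 0 ≤ w) (hnz : ∃ j, w j ≠ 0)
    (hρ : 0 < ρ) (hq : 0 ≤ q) (hd : InDemand v (powerPrice ρ q) y) :
    q ⬝ᵥ y ≤ (q ⬝ᵥ w) * v y := by
  have := hd.sub_mul_rpow_le hv hw hnz (hv.nonneg hw hd.1)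
  have h0 : 0 ≤ (q ⬝ᵥ w) * v y :=
    mul_nonneg (dotProduct_nonneg_of_nonneg hq hw) (hv.nonneg hw hd.1)
  rw [powerPrice, sub_le_sub_iff_left, mul_le_mul_iff_right₀ hρ] at this
  exact (Real.rpow_le_rpow_iff (dotProduct_nonneg_of_nonneg hq hd.1) h0
    (one_div_pos.2 hρ)).1 this

lemma inDemand_powerPrice (hv : IsLeontief w v) (hw : 0 ≤ w) (hρ : 0 < ρ) (hq : 0 ≤ q)
    (hy : Nonneg y) (hmax : IsMaxOn (fun s => s - ρ * ((q ⬝ᵥ w) * s) ^ (1 / ρ)) (Ici 0) (v y))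
    (hcost : q ⬝ᵥ y = (q ⬝ᵥ w) * v y) : InDemand v (powerPrice ρ q) y := by
  refine ⟨hy, fun z hz => ?_⟩
  have hvz := hv.nonneg hw hz
  calc v z - powerPrice ρ q z ≤ v z - ρ * ((q ⬝ᵥ w) * v z) ^ (1 / ρ) := by
        rw [powerPrice]
        gcongr
        · exact mul_nonneg (dotProduct_nonneg_of_nonneg hq hw) hvz
        · rw [mul_comm]; exact hv.mul_dotProduct_le hw hz hq
    _ ≤ v y - ρ * ((q ⬝ᵥ w) * v y) ^ (1 / ρ) := hmax hvz
    _ = v y - powerPrice ρ q y := by rw [powerPrice, hcost]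

end Pricing

section Allocation
variable {n m : ℕ} {v : Fin n → (Fin m → ℝ) → ℝ} {w : Matrix (Fin n) (Fin m) ℝ}
  {x : Fin n → Fin m → ℝ}

lemma ValidAlloc.vecMul_le (hv : ∀ i, IsLeontief (w i) (v i)) (hw : ∀ i, 0 ≤ w i)
    (hx : ValidAlloc x) : (fun i => v i (x i)) ᵥ* w ≤ 1 := fun j =>
  (Finset.sum_le_sum fun i _ => (hv i).mul_le (hw i) (hx.1 i) j).trans (hx.2 j)

lemma validAlloc_smul (hw : ∀ i, 0 ≤ w i) {s : Fin n → ℝ} (hs : 0 ≤ s) (hsw : s ᵥ* w ≤ 1) :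
    ValidAlloc fun i => s i • w i :=
  ⟨fun i j => mul_nonneg (hs i) (hw i j), hsw⟩

lemma ValidAlloc.eq_mul_of_vecMul_eq_one (hv : ∀ i, IsLeontief (w i) (v i))
    (hw : ∀ i, 0 ≤ w i) (hx : ValidAlloc x) {j : Fin m}
    (hj : ((fun i => v i (x i)) ᵥ* w) j = 1) (i : Fin n) : x i j = v i (x i) * w i j := by
  have hle : ∀ i ∈ Finset.univ, v i (x i) * w i j ≤ x i j :=
    fun i _ => (hv i).mul_le (hw i) (hx.1 i) j
  refine ((Finset.sum_eq_sum_iff_of_le hle).1 ?_ i (Finset.mem_univ i)).symm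
  exact le_antisymm (Finset.sum_le_sum hle) ((hx.2 j).trans_eq hj.symm)

lemma sum_dotProduct_le_sum {y : Fin n → Fin m → ℝ} (hy : ValidAlloc y) {q : Fin m → ℝ}
    (hq : 0 ≤ q) : ∑ i, q ⬝ᵥ y i ≤ ∑ j, q j := by
  rw [← dotProduct_sum]
  exact Finset.sum_le_sum fun j _ => by
    simpa [Finset.sum_apply] using mul_le_mul_of_nonneg_left (hy.2 j) (hq j)

end Allocation

section Equilibrium
variable {n m : ℕ} {v : Fin n → (Fin m → ℝ) → ℝ} {w : Matrix (Fin n) (Fin m) ℝ}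
  {x : Fin n → Fin m → ℝ} {ρ : ℝ}

lemma concaveOn_sum_rpow {ι : Type*} [Fintype ι] (hρ0 : 0 ≤ ρ) (hρ1 : ρ ≤ 1) :
    ConcaveOn ℝ (Set.univ.pi fun _ : ι => Ici 0) fun y => ∑ i, y i ^ ρ := by
  refine ⟨convex_pi fun _ _ => convex_Ici 0, fun y hy z hz a b ha hb hab => ?_⟩
  simp only [smul_eq_mul, Finset.mul_sum, ← Finset.sum_add_distrib, Pi.add_apply, Pi.smul_apply]
  exact Finset.sum_le_sum fun i _ =>
    (Real.concaveOn_rpow hρ0 hρ1).2 (hy i (mem_univ i)) (hz i (mem_univ i)) ha hb hab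

lemma sum_mul_vecMul_sub_one {ι κ : Type*} [Fintype ι] [Fintype κ] (A : Matrix ι κ ℝ)
    (μ : κ → ℝ) (s : ι → ℝ) :
    ∑ j, μ j * ((s ᵥ* A) j - 1) = ∑ i, (A i ⬝ᵥ μ) * s i - ∑ j, μ j := by
  simp only [mul_sub, mul_one, Finset.sum_sub_distrib]
  congr 1
  change μ ⬝ᵥ (s ᵥ* A) = (A *ᵥ μ) ⬝ᵥ s
  rw [dotProduct_comm, ← dotProduct_mulVec, dotProduct_comm]

lemma MaxCES.sum_rpow_le (hv : ∀ i, IsLeontief (w i) (v i)) (hw : ∀ i, 0 ≤ w i)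
    (hnz : ∀ i, ∃ j, w i j ≠ 0) (hρ : 0 < ρ) (hmax : MaxCES v ρ x) {s : Fin n → ℝ} (hs : 0 ≤ s)
    (hsw : s ᵥ* w ≤ 1) : ∑ i, s i ^ ρ ≤ ∑ i, v i (x i) ^ ρ := by
  have := hmax.2 _ (validAlloc_smul hw hs hsw)
  simp only [CES, (hv _).apply_smul (hw _) (hnz _) (hs _)] at this
  exact (Real.rpow_le_rpow_iff (Finset.sum_nonneg fun i _ => Real.rpow_nonneg (hs i) _)
    (Finset.sum_nonneg fun i _ => Real.rpow_nonneg ((hv i).nonneg (hw i) (hmax.1.1 i)) _)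
    (one_div_pos.2 hρ)).1 this

theorem MaxCES.exists_kkt (hv : ∀ i, IsLeontief (w i) (v i)) (hw : ∀ i, 0 ≤ w i)
    (hnz : ∀ i, ∃ j, w i j ≠ 0) (hρ0 : 0 < ρ) (hρ1 : ρ ≤ 1) (hmax : MaxCES v ρ x) :
    ∃ q, 0 ≤ q ∧ (∀ j, q j ≠ 0 → ((fun i => v i (x i)) ᵥ* w) j = 1) ∧
      ∀ i, IsMaxOn (fun t => t ^ ρ - ρ * (q ⬝ᵥ w i) * t) (Ici 0) (v i (x i)) := by
  classical
  have hS : Convex ℝ (Set.univ.pi fun _ : Fin n => Ici (0 : ℝ)) := convex_pi fun _ _ => convex_Ici 0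
  have hu : (fun i => v i (x i)) ∈ Set.univ.pi fun _ => Ici 0 :=
    fun i _ => (hv i).nonneg (hw i) (hmax.1.1 i)
  obtain ⟨μ, hμ, hcs, hL⟩ := (concaveOn_sum_rpow hρ0.le hρ1).exists_isMaxOn_lagrangian
    (g := fun j s => (s ᵥ* w) j - 1)
    (fun j => ((LinearMap.proj j ∘ₗ vecMulLinear w).convexOn hS).sub (concaveOn_const 1 hS))
    (y₀ := 0) (fun _ _ => le_refl (0 : ℝ)) (fun j => by simp [vecMul, dotProduct]) hu
    (fun j => sub_nonpos.2 (hmax.1.vecMul_le hv hw j))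
    fun s hs hsw => hmax.sum_rpow_le hv hw hnz hρ0 (fun i => hs i (mem_univ i))
      fun j => sub_nonpos.1 (hsw j)
  have hρq : ∀ i, ρ * ((ρ⁻¹ • μ) ⬝ᵥ w i) = w i ⬝ᵥ μ := fun i => by
    rw [smul_dotProduct, smul_eq_mul, mul_inv_cancel_left₀ hρ0.ne', dotProduct_comm]
  refine ⟨ρ⁻¹ • μ, smul_nonneg (inv_nonneg.2 hρ0.le) hμ, fun j hj => ?_, fun i => ?_⟩
  · obtain h | h := mul_eq_zero.1 (hcs j)
    · exact absurd (by simp [h]) hj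
    · linarith
  · refine IsMaxOn.apply_of_sum (φ := fun i t => t ^ ρ - ρ * ((ρ⁻¹ • μ) ⬝ᵥ w i) * t)
      (fun s hs => ?_) hu i
    have := hL hs
    simp only [mem_ofPred_eq, sum_mul_vecMul_sub_one, hρq, Finset.sum_sub_distrib] at this ⊢
    linarith

theorem MaxCES.exists_isWE (hv : ∀ i, IsLeontief (w i) (v i)) (hw : ∀ i, 0 ≤ w i)
    (hnz : ∀ i, ∃ j, w i j ≠ 0) (hρ0 : 0 < ρ) (hρ1 : ρ ≤ 1) (hmax : MaxCES v ρ x) :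
    ∃ q, 0 ≤ q ∧ IsWE v (powerPrice ρ q) x := by
  obtain ⟨q, hq, htight, hP⟩ := hmax.exists_kkt hv hw hnz hρ0 hρ1
  have hcost : ∀ i, q ⬝ᵥ x i = (q ⬝ᵥ w i) * v i (x i) := fun i => by
    rw [dotProduct, dotProduct, Finset.sum_mul]
    refine Finset.sum_congr rfl fun j _ => ?_
    by_cases hqj : q j = 0
    · simp [hqj]
    · rw [hmax.1.eq_mul_of_vecMul_eq_one hv hw (htight j hqj) i]; ring
  refine ⟨q, hq, fun i => inDemand_powerPrice (hv i) (hw i) hρ0 hq (hmax.1.1 i) ?_ (hcost i),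
    hmax.1, fun j hj => ?_⟩
  · exact (isMaxOn_sub_mul_rpow_iff hρ0 hρ1 (dotProduct_nonneg_of_nonneg hq (hw i))
      ((hv i).nonneg (hw i) (hmax.1.1 i))).2 (hP i)
  · have := htight j ((nonzeroCost_powerPrice_iff hρ0 hq j).1 hj).ne'
    rw [← this]
    exact Finset.sum_congr rfl fun i _ => hmax.1.eq_mul_of_vecMul_eq_one hv hw this i

theorem IsWE.maxCES (hv : ∀ i, IsLeontief (w i) (v i)) (hw : ∀ i, 0 ≤ w i)
    (hnz : ∀ i, ∃ j, w i j ≠ 0) (hρ0 : 0 < ρ) (hρ1 : ρ ≤ 1) {q : Fin m → ℝ} (hq : 0 ≤ q)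
    (hwe : IsWE v (powerPrice ρ q) x) : MaxCES v ρ x := by
  obtain ⟨hdem, hx, hclear⟩ := hwe
  have hP : ∀ i, IsMaxOn (fun t => t ^ ρ - ρ * (q ⬝ᵥ w i) * t) (Ici 0) (v i (x i)) := fun i =>
    (isMaxOn_sub_mul_rpow_iff hρ0 hρ1 (dotProduct_nonneg_of_nonneg hq (hw i))
      ((hv i).nonneg (hw i) (hx.1 i))).1
      ((hdem i).isMaxOn_sub_mul_rpow (hv i) (hw i) (hnz i) hρ0 hq)
  have hmarket : ∑ j, q j = ∑ i, q ⬝ᵥ x i := by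
    rw [← dotProduct_sum]
    refine Finset.sum_congr rfl fun j _ => ?_
    obtain hqj | hqj := (hq j).eq_or_lt
    · simp [← hqj]
    · rw [Finset.sum_apply, hclear j ((nonzeroCost_powerPrice_iff hρ0 hq j).2 hqj), mul_one]
  have hbudget : ∑ j, q j ≤ ∑ i, (q ⬝ᵥ w i) * v i (x i) :=
    hmarket.trans_le (Finset.sum_le_sum fun i _ =>
      (hdem i).dotProduct_le_mul (hv i) (hw i) (hnz i) hρ0 hq)
  refine ⟨hx, fun y hy => ?_⟩
  have hvy : ∀ i, 0 ≤ v i (y i) := fun i => (hv i).nonneg (hw i) (hy.1 i)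
  have := sum_le_sum_of_isMaxOn_sub_mul (f := fun _ t => t ^ ρ) (s := fun i => v i (y i)) hP hvy ?_
  · exact Real.rpow_le_rpow (Finset.sum_nonneg fun i _ => Real.rpow_nonneg (hvy i) _) this
      (one_div_pos.2 hρ0).le
  · simp only [mul_assoc, ← Finset.mul_sum]
    refine mul_le_mul_of_nonneg_left ?_ hρ0.le
    calc ∑ i, (q ⬝ᵥ w i) * v i (y i) ≤ ∑ i, q ⬝ᵥ y i := Finset.sum_le_sum fun i _ => by
          rw [mul_comm]; exact (hv i).mul_dotProduct_le (hw i) (hy.1 i) hq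
      _ ≤ ∑ j, q j := sum_dotProduct_le_sum hy hq
      _ ≤ _ := hbudget

end Equilibrium

theorem stmt18_general {n m : ℕ} (v : Fin n → (Fin m → ℝ) → ℝ)
    (w : Fin n → Fin m → ℝ) (hw_nn : ∀ i j, 0 ≤ w i j)
    (hw_nz : ∀ i, ∃ j, w i j ≠ 0)
    -- v i is the Leontief valuation with weights w i: on nonnegative bundles,
    -- v i y is the least element of {y j / w i j : w i j ≠ 0}
    (hv : ∀ i (y : Fin m → ℝ), Nonneg y →
      IsLeast {t : ℝ | ∃ j, w i j ≠ 0 ∧ t = y j / w i j} (v i y))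
    (ρ : ℝ) (hρ0 : 0 < ρ) (hρ1 : ρ ≤ 1)
    (x : Fin n → Fin m → ℝ) :
    MaxCES v ρ x ↔ ∃ q : Fin m → ℝ, (∀ j, 0 ≤ q j) ∧
      IsWE v (fun y => ρ * (∑ j, q j * y j) ^ (1 / ρ)) x :=
  ⟨fun hmax => hmax.exists_isWE hv hw_nn hw_nz hρ0 hρ1,
    fun ⟨_, hq, hwe⟩ => hwe.maxCES hv hw_nn hw_nz hρ0 hρ1 hq⟩

theorem stmt18 {n m : ℕ} (v : Fin n → (Fin m → ℝ) → ℝ)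
    (w : Fin n → Fin m → ℝ) (hw_nn : ∀ i j, 0 ≤ w i j)
    (hw_nz : ∀ i, ∃ j, w i j ≠ 0)
    -- v i is the Leontief valuation with weights w i: on nonnegative bundles,
    -- v i y is the least element of {y j / w i j : w i j ≠ 0}
    (hv : ∀ i (y : Fin m → ℝ), Nonneg y →
      IsLeast {t : ℝ | ∃ j, w i j ≠ 0 ∧ t = y j / w i j} (v i y))
    (ρ : ℝ) (hρ0 : 0 < ρ) (hρ1 : ρ ≤ 1)
    (x : Fin n → Fin m → ℝ) (hx : ValidAlloc x) :
    MaxCES v ρ x ↔ ∃ q : Fin m → ℝ, (∀ j, 0 ≤ q j) ∧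
      IsWE v (fun y => ρ * (∑ j, q j * y j) ^ (1 / ρ)) x :=
  stmt18_general v w hw_nn hw_nz hv ρ hρ0 hρ1 x
end
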